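/- arXiv:1710.01071 — 9 statements merged into one kernel-verified Lean document; each statement's English description precedes it below -/
import Mathlib

section
/- Let m = 2^a · b be a positive even integer with a > 0 and b odd. Then the number of matrices [[x, y], [0, z]] with integer entries satisfying xz = m, 0 ≤ y < z, gcd(x, y, z) = 1, and x odd, equals 2^a · ψ(b), where ψ(n) = n · ∏_{p | n, p prime} (1 + 1/p). -/
/-- The Dedekind psi function `ψ(n) = n · ∏_{p | n, p prime} (1 + 1/p)`. -/
def dedekindPsi (n : ℕ) : ℕ :=
  (n / n.primeFactors.prod id) * n.primeFactors.prod (fun p => p + 1)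

/-!
The matrices are the primitive Hermite normal forms of determinant `m`. Sorting them by their
diagonal `(x, z)`, the admissible `y ∈ [0, z)` are those coprime to `g = gcd(x, z)`, and there are
`(z / g) φ(g)` of them. For odd `x` we have `x ∣ b` and `z = 2^a (b / x)` with
`gcd(x, z) = gcd(x, b / x)`, which pulls out the factor `2^a`. The remaining sum
`∑_{xz = n} (z / g) φ(g)` is multiplicative in `n`, since a divisor of a product of coprime numbers
splits uniquely, and at `n = p^(k+1)` it is `p^(k+1) + 1 + ∑_{j<k} p^j (p - 1)`, which telescopes
to `p^(k+1) + p^k = ψ(p^(k+1))`.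
-/

open Finset
open scoped Nat

theorem dedekindPsi_mul {m n : ℕ} (h : m.Coprime n) :
    dedekindPsi (m * n) = dedekindPsi m * dedekindPsi n := by
  simp only [dedekindPsi, id_eq, h.primeFactors_mul, prod_union h.disjoint_primeFactors,
    ← Nat.div_mul_div_comm (Nat.prod_primeFactors_dvd m) (Nat.prod_primeFactors_dvd n)]
  ring

theorem dedekindPsi_prime_pow_succ {p : ℕ} (hp : p.Prime) (k : ℕ) :
    dedekindPsi (p ^ (k + 1)) = p ^ (k + 1) + p ^ k := by
  rw [dedekindPsi, Nat.primeFactors_prime_pow k.succ_ne_zero hp, prod_singleton, prod_singleton,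
    id, pow_succ, Nat.mul_div_cancel _ hp.pos, mul_add_one]

theorem card_filter_coprime_range_mul (d k : ℕ) :
    #{y ∈ range (d * k) | d.Coprime y} = k * φ d := by
  induction k with
  | zero => simp
  | succ k ih =>
    rw [← Nat.count_eq_card_filter_range] at ih ⊢
    simp_rw [mul_add_one, Nat.count_add, ih, Nat.coprime_mul_left_add_right,
      Nat.count_eq_card_filter_range, ← Nat.totient_eq_card_coprime, add_one_mul]

theorem card_filter_coprime_range_of_dvd {d z : ℕ} (hd : d ∣ z) :
    #{y ∈ range z | d.Coprime y} = z / d * φ d := by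
  obtain ⟨k, rfl⟩ := hd
  rcases d.eq_zero_or_pos with rfl | hd
  · simp
  rw [Nat.mul_div_cancel_left _ hd, card_filter_coprime_range_mul]

theorem Nat.filter_odd_divisors_two_pow_mul (a : ℕ) {b : ℕ} (hb : Odd b) :
    {x ∈ (2 ^ a * b).divisors | Odd x} = b.divisors := by
  ext x
  have hb0 : b ≠ 0 := hb.pos.ne'
  simp only [mem_filter, Nat.mem_divisors, and_iff_left hb0,
    and_iff_left (mul_ne_zero (pow_ne_zero a two_ne_zero) hb0)]
  exact ⟨fun ⟨hx, hxodd⟩ => ((Nat.coprime_two_right.2 hxodd).pow_right a).dvd_of_dvd_mul_left hx,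
    fun hx => ⟨hx.mul_left _, hb.of_dvd_nat hx⟩⟩

def hermiteCount (x z : ℕ) : ℕ := z / x.gcd z * φ (x.gcd z)

def hermiteSum (n : ℕ) : ℕ := ∑ p ∈ n.divisorsAntidiagonal, hermiteCount p.1 p.2

theorem card_filter_gcd_eq_one (x z : ℕ) :
    #{y ∈ range z | (x.gcd y).gcd z = 1} = hermiteCount x z := by
  simp_rw [Nat.gcd_right_comm x _ z]
  exact card_filter_coprime_range_of_dvd (Nat.gcd_dvd_right x z)

theorem hermiteCount_one_left (z : ℕ) : hermiteCount 1 z = z := by simp [hermiteCount]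

theorem hermiteCount_one_right (x : ℕ) : hermiteCount x 1 = 1 := by simp [hermiteCount]

theorem hermiteCount_mul_right {x c : ℕ} (h : x.Coprime c) (z : ℕ) :
    hermiteCount x (c * z) = c * hermiteCount x z := by
  rw [hermiteCount, hermiteCount, h.symm.gcd_mul_left_cancel_right,
    Nat.mul_div_assoc _ (Nat.gcd_dvd_right x z), mul_assoc]

theorem hermiteCount_mul {x₁ z₁ x₂ z₂ : ℕ} (h : (x₁ * z₁).Coprime (x₂ * z₂)) :
    hermiteCount (x₁ * x₂) (z₁ * z₂) = hermiteCount x₁ z₁ * hermiteCount x₂ z₂ := by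
  rw [Nat.coprime_mul_iff_left, Nat.coprime_mul_iff_right, Nat.coprime_mul_iff_right] at h
  obtain ⟨⟨-, hx₁z₂⟩, hz₁x₂, hz₁z₂⟩ := h
  have hgcd : (x₁ * x₂).gcd (z₁ * z₂) = x₁.gcd z₁ * x₂.gcd z₂ := by
    rw [hz₁z₂.gcd_mul, hz₁x₂.symm.gcd_mul_right_cancel, hx₁z₂.gcd_mul_left_cancel]
  have hg₁ := Nat.gcd_dvd_right x₁ z₁
  have hg₂ := Nat.gcd_dvd_right x₂ z₂
  unfold hermiteCount
  rw [hgcd, ← Nat.div_mul_div_comm hg₁ hg₂,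
    Nat.totient_mul ((hz₁z₂.coprime_dvd_left hg₁).coprime_dvd_right hg₂)]
  ring

theorem hermiteCount_prime_pow_succ {p : ℕ} (hp : p.Prime) (j i : ℕ) :
    hermiteCount (p ^ (j + 1)) (p ^ (i + 1)) = p ^ i * (p - 1) := by
  have hgcd : (p ^ (j + 1)).gcd (p ^ (i + 1)) = p ^ (min j i + 1) := by
    rcases le_total j i with h | h
    · rw [min_eq_left h]; exact Nat.gcd_eq_left (Nat.pow_dvd_pow p (by omega))
    · rw [min_eq_right h]; exact Nat.gcd_eq_right (Nat.pow_dvd_pow p (by omega))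
  rw [hermiteCount, hgcd, Nat.pow_div (by omega) hp.pos, Nat.totient_prime_pow_succ hp,
    ← mul_assoc, ← pow_add]
  congr 2
  omega

theorem hermiteSum_mul {m n : ℕ} (h : m.Coprime n) :
    hermiteSum (m * n) = hermiteSum m * hermiteSum n := by
  simp only [hermiteSum, Nat.sum_divisorsAntidiagonal hermiteCount, h.divisors_mul, sum_map,
    sum_mul_sum, ← sum_product']
  rw [← sum_attach (m.divisors ×ˢ n.divisors)]
  refine sum_congr rfl ?_
  rintro ⟨⟨d₁, d₂⟩, hd⟩ -
  have hd₁ := Nat.dvd_of_mem_divisors (mem_product.1 hd).1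
  have hd₂ := Nat.dvd_of_mem_divisors (mem_product.1 hd).2
  change hermiteCount (d₁ * d₂) (m * n / (d₁ * d₂)) = _
  rw [← Nat.div_mul_div_comm hd₁ hd₂, hermiteCount_mul]
  rwa [Nat.mul_div_cancel' hd₁, Nat.mul_div_cancel' hd₂]

theorem hermiteSum_prime_pow_succ {p : ℕ} (hp : p.Prime) (k : ℕ) :
    hermiteSum (p ^ (k + 1)) = p ^ (k + 1) + p ^ k := by
  have hmiddle : ∑ j ∈ range k, hermiteCount (p ^ (j + 1)) (p ^ (k + 1) / p ^ (j + 1))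
      = ∑ j ∈ range k, p ^ j * (p - 1) := by
    rw [← sum_range_reflect]
    refine sum_congr rfl fun j hj => ?_
    rw [mem_range] at hj
    rw [Nat.pow_div (by omega) hp.pos, show k + 1 - (k - 1 - j + 1) = j + 1 by omega,
      hermiteCount_prime_pow_succ hp]
  have hgeom := geom_sum_mul_add (p - 1) k
  rw [Nat.sub_add_cancel hp.one_le, sum_mul] at hgeom
  rw [hermiteSum, Nat.sum_divisorsAntidiagonal hermiteCount, Nat.sum_divisors_prime_pow hp,
    sum_range_succ', sum_range_succ, hmiddle, Nat.div_self (pow_pos hp.pos _), pow_zero,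
    Nat.div_one, hermiteCount_one_left, hermiteCount_one_right]
  linarith

theorem hermiteSum_eq_dedekindPsi (n : ℕ) : hermiteSum n = dedekindPsi n := by
  induction n using Nat.recOnPosPrimePosCoprime with
  | prime_pow p k hp hk =>
    obtain ⟨k, rfl⟩ := Nat.exists_eq_add_one_of_ne_zero hk.ne'
    rw [hermiteSum_prime_pow_succ hp, dedekindPsi_prime_pow_succ hp]
  | zero => simp [hermiteSum, dedekindPsi]
  | one => simp [hermiteSum, dedekindPsi, hermiteCount]
  | coprime m n _ _ h ihm ihn => rw [hermiteSum_mul h, dedekindPsi_mul h, ihm, ihn]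

theorem sum_filter_odd_hermiteCount_two_pow_mul (a : ℕ) {b : ℕ} (hb : Odd b) :
    ∑ p ∈ (2 ^ a * b).divisorsAntidiagonal with Odd p.1, hermiteCount p.1 p.2
      = 2 ^ a * hermiteSum b := by
  rw [sum_filter, Nat.sum_divisorsAntidiagonal (fun x z => if Odd x then hermiteCount x z else 0),
    ← sum_filter, Nat.filter_odd_divisors_two_pow_mul a hb, hermiteSum,
    Nat.sum_divisorsAntidiagonal hermiteCount, mul_sum]
  refine sum_congr rfl fun x hx => ?_
  have hxb := Nat.dvd_of_mem_divisors hx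
  rw [Nat.mul_div_assoc _ hxb,
    hermiteCount_mul_right ((Nat.coprime_two_right.2 (hb.of_dvd_nat hxb)).pow_right a)]

def oddPrimitiveTriples (m : ℕ) : Finset ((_ : ℕ × ℕ) × ℕ) :=
  {p ∈ m.divisorsAntidiagonal | Odd p.1}.sigma fun p => {y ∈ range p.2 | (p.1.gcd y).gcd p.2 = 1}

theorem card_oddPrimitiveTriples (m : ℕ) :
    #(oddPrimitiveTriples m)
      = ∑ p ∈ m.divisorsAntidiagonal with Odd p.1, hermiteCount p.1 p.2 := by
  rw [oddPrimitiveTriples, card_sigma]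
  exact sum_congr rfl fun p _ => card_filter_gcd_eq_one p.1 p.2

theorem card_upperTriangular_eq_card_oddPrimitiveTriples (m : ℕ) :
    Nat.card {M : Matrix (Fin 2) (Fin 2) ℤ //
        M 1 0 = 0 ∧ M 0 0 * M 1 1 = (m : ℤ) ∧ 0 ≤ M 0 1 ∧ M 0 1 < M 1 1 ∧
        Int.gcd (Int.gcd (M 0 0) (M 0 1)) (M 1 1) = 1 ∧ Odd (M 0 0)}
      = #(oddPrimitiveTriples m) := by
  rw [← Nat.card_eq_finsetCard]
  refine Nat.card_congr
    { toFun := fun M => ⟨⟨((M.1 0 0).natAbs, (M.1 1 1).natAbs), (M.1 0 1).natAbs⟩, ?_⟩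
      invFun := fun q => ⟨!![(q.1.1.1 : ℤ), q.1.2; 0, q.1.1.2], ?_⟩
      left_inv := ?_
      right_inv := ?_ }
  · obtain ⟨M, -, hxz, hy, hyz, hgcd, hodd⟩ := M
    have hmul : (M 0 0).natAbs * (M 1 1).natAbs = m := by
      rw [← Int.natAbs_mul, hxz, Int.natAbs_natCast]
    simp only [oddPrimitiveTriples, mem_sigma, mem_filter, Nat.mem_divisorsAntidiagonal, mem_range]
    refine ⟨⟨⟨hmul, ?_⟩, Int.natAbs_odd.2 hodd⟩, by omega, by simpa [Int.gcd_eq_natAbs] using hgcd⟩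
    rw [← hmul]
    exact mul_ne_zero (Int.natAbs_odd.2 hodd).pos.ne' (by omega)
  · obtain ⟨⟨⟨x, z⟩, y⟩, hq⟩ := q
    simp only [oddPrimitiveTriples, mem_sigma, mem_filter, Nat.mem_divisorsAntidiagonal,
      mem_range] at hq
    obtain ⟨⟨⟨hxz, -⟩, hodd⟩, hyz, hgcd⟩ := hq
    simp only [Matrix.of_apply, Matrix.cons_val', Matrix.cons_val_zero, Matrix.cons_val_one,
      Matrix.empty_val', Matrix.cons_val_fin_one, Int.odd_coe_nat]
    exact ⟨trivial, by exact_mod_cast hxz, by positivity, by exact_mod_cast hyz,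
      by simpa [Int.gcd_eq_natAbs] using hgcd, hodd⟩
  · rintro ⟨M, h10, hxz, hy, hyz, -, -⟩
    have hx : 0 ≤ M 0 0 :=
      nonneg_of_mul_nonneg_left (hxz ▸ Nat.cast_nonneg m) (hy.trans_lt hyz)
    ext i j
    fin_cases i <;> fin_cases j <;>
      simp [hx, hy, (hy.trans_lt hyz).le, h10]
  · intro q
    simp

theorem count_M1_eq_general (a b m : ℕ) (hb : Odd b) (hm : m = 2 ^ a * b) :
    Nat.card {M : Matrix (Fin 2) (Fin 2) ℤ //
        M 1 0 = 0 ∧ M 0 0 * M 1 1 = (m : ℤ) ∧ 0 ≤ M 0 1 ∧ M 0 1 < M 1 1 ∧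
        Int.gcd (Int.gcd (M 0 0) (M 0 1)) (M 1 1) = 1 ∧ Odd (M 0 0)}
      = 2 ^ a * dedekindPsi b := by
  rw [card_upperTriangular_eq_card_oddPrimitiveTriples, card_oddPrimitiveTriples, hm,
    sum_filter_odd_hermiteCount_two_pow_mul a hb, hermiteSum_eq_dedekindPsi]

/-- Lemma: for `m = 2^a·b` even (`a > 0`, `b` odd), the number of integer matrices
`[[x, y], [0, z]]` with `xz = m`, `0 ≤ y < z`, `gcd(x,y,z) = 1` and `x` odd equals
`2^a · ψ(b)`. -/
theorem count_M1_eq (a b m : ℕ) (ha : 0 < a) (hb : Odd b) (hm : m = 2 ^ a * b) :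
    Nat.card {M : Matrix (Fin 2) (Fin 2) ℤ //
        M 1 0 = 0 ∧ M 0 0 * M 1 1 = (m : ℤ) ∧ 0 ≤ M 0 1 ∧ M 0 1 < M 1 1 ∧
        Int.gcd (Int.gcd (M 0 0) (M 0 1)) (M 1 1) = 1 ∧ Odd (M 0 0)}
      = 2 ^ a * dedekindPsi b :=
  count_M1_eq_general a b m hb hm
end

section
/- Let G be a group, γ, γ' two elements of GL(2,ℝ)⁺ of the form [[x, y], [0, z]] and [[x', y'], [0, z']] with x, z, x', z' > 0, det γ = det γ', 0 ≤ y < z, 0 ≤ y' < z'. If γ'·γ⁻¹ lies in a subgroup of PSL(2,ℝ) whose elements fixing ∞ are exactly the images of ±[[1, k], [0, 1]] for k ∈ ℤ, then γ = γ' (as elements of PGL(2,ℝ)⁺). -/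
/-- If `γ = [[x,y],[0,z]]` and `γ' = [[x',y'],[0,z']]` are upper triangular matrices
with positive diagonal entries, equal determinants, `0 ≤ y < z`, `0 ≤ y' < z'`, and
`γ'·γ⁻¹` is (the image in `PSL(2,ℝ)` of) `±[[1,k],[0,1]]` with `k ∈ ℤ`
(equivalently `γ' = ε·[[1,k],[0,1]]·γ` with `ε = ±1`), then `γ = γ'`. -/
theorem upper_triangular_coset_reps_distinct
    (x y z x' y' z' k : ℝ) (hk : ∃ n : ℤ, k = (n : ℝ)) (ε : ℝ) (hε : ε = 1 ∨ ε = -1)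
    (hx : 0 < x) (hz : 0 < z) (hx' : 0 < x') (hz' : 0 < z')
    (hdet : x * z = x' * z')
    (hy0 : 0 ≤ y) (hyz : y < z) (hy0' : 0 ≤ y') (hyz' : y' < z')
    (hrel : !![x', y'; (0 : ℝ), z'] = ε • (!![(1 : ℝ), k; 0, 1] * !![x, y; 0, z])) :
    x = x' ∧ y = y' ∧ z = z' := by
  obtain ⟨n, rfl⟩ := hk
  have h00 := congrFun (congrFun hrel 0) 0
  have h01 := congrFun (congrFun hrel 0) 1
  have h11 := congrFun (congrFun hrel 1) 1
  simp [Matrix.mul_apply, Fin.sum_univ_two] at h00 h01 h11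
  -- h00 : x' = ε * x, h01 : y' = ε * (y + n*z), h11 : z' = ε * z
  have hε1 : ε = 1 := by
    rcases hε with h | h
    · exact h
    · exfalso; rw [h] at h00; nlinarith
  subst hε1
  rw [one_mul] at h00 h01 h11
  have hzz : z = z' := h11.symm
  have hn0 : n = 0 := by
    rcases lt_trichotomy n 0 with h | h | h
    · have hn : n ≤ -1 := by omega
      have : (n : ℝ) ≤ -1 := by exact_mod_cast hn
      nlinarith
    · exact h
    · have : (1 : ℝ) ≤ (n : ℝ) := by exact_mod_cast h
      nlinarith
  subst hn0
  refine ⟨h00.symm, ?_, hzz⟩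
  simp at h01
  linarith
end

section
/- If [[x, y], [0, z]] is an integer matrix with x odd, xz = m, 0 ≤ y < z, gcd(x, y, z) = 1, then for any matrix [[1, 0], [2, 1]], the product [[x, y], [0, z]]·[[1, 0], [2, 1]] = [[x+2y, y], [2z, z]] can be brought, by left multiplication by an element of Γ₀(2) = {[[a,b],[c,d]] ∈ SL(2,ℤ) : 2 | c} and an integer upper-triangular translation, to a matrix of the form [[g, y'], [0, m/g]] with g odd, g | m, and 0 ≤ y' < m/g. -/
/-!
Write `s = x + 2y`, so the matrix to reduce is `[[s, y], [2z, z]]`, of determinant `m`. Left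
multiplication by a determinant-one matrix built from a Bézout relation for `g = gcd(s, 2z)`
turns the first column into `(g, 0)`, hence the matrix into `[[g, w], [0, m/g]]`. Since `s` is
odd, so is `g`; thus `g ∣ z` and the lower-left entry `-2z/g` of the Bézout matrix is even, which
puts it in `Γ₀(2)`. A translation then reduces `w` modulo `m/g`. Common divisors of all entries
are unchanged by unimodular multiplication, and those of `[[s, y], [2z, z]]` divide
`gcd(x, y, z) = 1`.
-/

open Matrix

theorem Matrix.dvd_apply_of_dvd_mul_apply {n R : Type*} [Fintype n] [DecidableEq n] [CommRing R]
    {U A : Matrix n n R} (hU : U.det = 1) {d : R} (h : ∀ i j, d ∣ (U * A) i j) (i j : n) :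
    d ∣ A i j := by
  have hA : A = U.adjugate * (U * A) := by
    rw [← Matrix.mul_assoc, adjugate_mul, hU, one_smul, Matrix.one_mul]
  rw [hA, mul_apply]
  exact Finset.dvd_sum fun k _ => dvd_mul_of_dvd_right (h k j) _

namespace Int

def bezoutMatrix (s c : ℤ) : Matrix (Fin 2) (Fin 2) ℤ :=
  !![gcdA s c, gcdB s c; -(c / gcd s c), s / gcd s c]

variable {s c : ℤ}

theorem det_bezoutMatrix (h : gcd s c ≠ 0) : (bezoutMatrix s c).det = 1 := by
  have hs := Int.mul_ediv_cancel' (gcd_dvd_left s c)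
  have hc := Int.mul_ediv_cancel' (gcd_dvd_right s c)
  rw [bezoutMatrix, det_fin_two_of]
  apply mul_left_cancel₀ (natCast_ne_zero.mpr h)
  linear_combination gcdA s c * hs + gcdB s c * hc - gcd_eq_gcd_ab s c

theorem bezoutMatrix_mul (h : gcd s c ≠ 0) (y z : ℤ) :
    bezoutMatrix s c * !![s, y; c, z] =
      !![(gcd s c : ℤ), gcdA s c * y + gcdB s c * z; 0, (s * z - c * y) / gcd s c] := by
  have hs := Int.mul_ediv_cancel' (gcd_dvd_left s c)
  have hc := Int.mul_ediv_cancel' (gcd_dvd_right s c)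
  have hdet : s * z - c * y = gcd s c * (s / gcd s c * z - c / gcd s c * y) := by
    linear_combination (-z) * hs + y * hc
  rw [hdet, Int.mul_ediv_cancel_left _ (natCast_ne_zero.mpr h), bezoutMatrix]
  ext i j; fin_cases i <;> fin_cases j <;> simp [mul_apply, Fin.sum_univ_two]
  · linear_combination -gcd_eq_gcd_ab s c
  · linear_combination (c / gcd s c) * hs - (s / gcd s c) * hc
  · ring

theorem translation_mul_eq_emod (g w q : ℤ) :
    !![(1 : ℤ), -(w / q); 0, 1] * !![g, w; 0, q] = !![g, w % q; 0, q] := by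
  rw [emod_def]
  ext i j; fin_cases i <;> fin_cases j <;> simp; ring

theorem gcd_gcd_eq_one_of_det_eq_one_mul {U A : Matrix (Fin 2) (Fin 2) ℤ} {g y q : ℤ}
    (hU : U.det = 1) (hUA : U * A = !![g, y; 0, q])
    (hA : ∀ d : ℤ, (∀ i j, d ∣ A i j) → IsUnit d) : gcd (gcd g y) q = 1 := by
  set D : ℤ := ↑(gcd (gcd g y) q)
  have hDg : D ∣ g := (gcd_dvd_left _ _).trans (gcd_dvd_left g y)
  have hDy : D ∣ y := (gcd_dvd_left _ _).trans (gcd_dvd_right g y)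
  have hDq : D ∣ q := gcd_dvd_right _ _
  have hD : ∀ i j, D ∣ (U * A) i j := by
    rw [hUA]
    intro i j; fin_cases i <;> fin_cases j <;> simp [hDg, hDy, hDq]
  exact Nat.isUnit_iff.mp (ofNat_isUnit.mp (hA D (dvd_apply_of_dvd_mul_apply hU hD)))

theorem isUnit_of_dvd_apply_mul_lower {x y z d : ℤ} (hgcd : gcd (gcd x y) z = 1)
    (hd : ∀ i j, d ∣ (!![x, y; 0, z] * !![(1 : ℤ), 0; 2, 1]) i j) : IsUnit d := by
  have hdy : d ∣ y := by simpa using hd 0 1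
  have hdz : d ∣ z := by simpa using hd 1 1
  have hdx : d ∣ x := by
    have hds : d ∣ x + y * 2 := by simpa using hd 0 0
    exact (dvd_add_left (hdy.mul_right 2)).mp hds
  have hd1 := dvd_coe_gcd (dvd_coe_gcd hdx hdy) hdz
  rw [hgcd, Nat.cast_one] at hd1
  exact isUnit_of_dvd_one hd1

end Int

theorem gamma0_closure_step_general (m x y z : ℤ) (hm : 0 < m) (hxz : x * z = m) (hx : Odd x)
    (hgcd : Int.gcd (Int.gcd x y) z = 1) :
    ∃ (r : Matrix (Fin 2) (Fin 2) ℤ) (t g y' : ℤ),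
      r.det = 1 ∧ 2 ∣ r 1 0 ∧ Odd g ∧ g ∣ m ∧ 0 ≤ y' ∧ y' < m / g ∧
      Int.gcd (Int.gcd g y') (m / g) = 1 ∧
      !![(1 : ℤ), t; 0, 1] * (r * (!![x, y; 0, z] * !![(1 : ℤ), 0; 2, 1]))
        = !![g, y'; 0, m / g] := by
  set s := x + 2 * y
  have hs : Odd s := hx.add_even (even_two_mul y)
  have hg0 : Int.gcd s (2 * z) ≠ 0 := Int.gcd_ne_zero_left fun h => by simp [h] at hs
  set g : ℤ := ↑(Int.gcd s (2 * z))
  have hg_pos : 0 < g := Int.natCast_pos.mpr (Nat.pos_of_ne_zero hg0)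
  have hgs : g ∣ s := Int.gcd_dvd_left _ _
  have hg : Odd g := Int.not_even_iff_odd.1 fun he => Int.not_even_iff_odd.2 hs (hgs.even he)
  have hgz : g ∣ z := (Int.isCoprime_two_right.mpr hg).dvd_of_dvd_mul_left (Int.gcd_dvd_right _ _)
  have hdet : s * z - 2 * z * y = m := by rw [← hxz]; ring
  have hgm : g ∣ m :=
    hdet ▸ dvd_sub (dvd_mul_of_dvd_left hgs z) (dvd_mul_of_dvd_left (Int.gcd_dvd_right _ _) y)
  have hq : 0 < m / g := Int.ediv_pos_of_pos_of_dvd hm hg_pos.le hgm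
  set w := Int.gcdA s (2 * z) * y + Int.gcdB s (2 * z) * z
  have hM : !![x, y; 0, z] * !![(1 : ℤ), 0; 2, 1] = !![s, y; 2 * z, z] := by
    ext i j; fin_cases i <;> fin_cases j <;> simp <;> ring
  have hN : !![1, -(w / (m / g)); 0, 1] *
      (Int.bezoutMatrix s (2 * z) * (!![x, y; 0, z] * !![(1 : ℤ), 0; 2, 1])) =
      !![g, w % (m / g); 0, m / g] := by
    rw [hM, Int.bezoutMatrix_mul hg0, hdet, Int.translation_mul_eq_emod]
  refine ⟨Int.bezoutMatrix s (2 * z), -(w / (m / g)), g, w % (m / g), Int.det_bezoutMatrix hg0,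
    ?_, hg, hgm, Int.emod_nonneg _ hq.ne', Int.emod_lt_of_pos _ hq, ?_, hN⟩
  · show 2 ∣ -(2 * z / g)
    rw [dvd_neg, Int.mul_ediv_assoc 2 hgz]
    exact dvd_mul_right 2 _
  · refine Int.gcd_gcd_eq_one_of_det_eq_one_mul ?_ ((Matrix.mul_assoc _ _ _).trans hN)
      fun d hd => Int.isUnit_of_dvd_apply_mul_lower hgcd hd
    rw [det_mul, Int.det_bezoutMatrix hg0]
    simp

/-- If `[[x,y],[0,z]]` is an integer matrix with `x` odd, `xz = m`, `0 ≤ y < z` and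
`gcd(x,y,z) = 1`, then the product `[[x,y],[0,z]]·[[1,0],[2,1]]` can be brought, by
left multiplication by an element `r` of `Γ₀(2) ⊆ SL(2,ℤ)` and by an upper
triangular integer translation `[[1,t],[0,1]]`, to a matrix `[[g,y'],[0,m/g]]` with
`g` odd, `g ∣ m`, `0 ≤ y' < m/g`, and coprime entries. -/
theorem gamma0_closure_step (m x y z : ℤ) (hm : 0 < m) (hxz : x * z = m) (hx : Odd x)
    (hy0 : 0 ≤ y) (hyz : y < z) (hgcd : Int.gcd (Int.gcd x y) z = 1) :
    ∃ (r : Matrix (Fin 2) (Fin 2) ℤ) (t g y' : ℤ),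
      r.det = 1 ∧ 2 ∣ r 1 0 ∧ Odd g ∧ g ∣ m ∧ 0 ≤ y' ∧ y' < m / g ∧
      Int.gcd (Int.gcd g y') (m / g) = 1 ∧
      !![(1 : ℤ), t; 0, 1] * (r * (!![x, y; 0, z] * !![(1 : ℤ), 0; 2, 1]))
        = !![g, y'; 0, m / g] :=
  gamma0_closure_step_general m x y z hm hxz hx hgcd
end

section
/- Let m be a positive even integer. Writing Γ = Γ₀(2)⁺ ⊂ PSL(2,ℝ), the double coset Γ·[[1,0],[0,m]]·Γ₀(2) decomposes as the disjoint union of left cosets Γ·γ over all γ = [[x,y],[0,z]] with xz = m, 0 ≤ y < z, gcd(x,y,z) = 1 and x odd. -/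
noncomputable section

/-- 2×2 real matrices. -/
abbrev M2R := Matrix (Fin 2) (Fin 2) ℝ

/-- `A` represents an element of `Γ₀(2) ⊆ PSL(2,ℝ)`: it is an integral matrix of
determinant 1 whose lower-left entry is even. -/
def IsGamma0Two (A : M2R) : Prop :=
  ∃ B : Matrix (Fin 2) (Fin 2) ℤ, A = B.map (fun x => (x : ℝ)) ∧ B.det = 1 ∧ (2 : ℤ) ∣ B 1 0

/-- The Fricke involution `w₂ = 2^{-1/2}·[[0,-1],[2,0]]`. -/
def w2mat : M2R := (Real.sqrt 2)⁻¹ • !![0, -1; 2, 0]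

/-- `A` represents an element of `Γ₀(2)⁺`, the extension of `Γ₀(2)` by the Fricke
involution `w₂` (note that `-B ∈ Γ₀(2)` whenever `B ∈ Γ₀(2)`, so signs are absorbed). -/
def IsGamma0TwoPlus (A : M2R) : Prop :=
  IsGamma0Two A ∨ ∃ B : M2R, IsGamma0Two B ∧ A = B * w2mat

/-- Equality of matrices up to a positive real scalar (equality in `PGL(2,ℝ)⁺`). -/
def projEq (A B : M2R) : Prop := ∃ c : ℝ, 0 < c ∧ A = c • B

/-- The set `M₁^m` of matrices `[[x,y],[0,z]]` with `xz = m`, `0 ≤ y < z`,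
`gcd(x,y,z) = 1` and `x` odd. -/
def M1Set (m : ℕ) : Set M2R :=
  {A | ∃ x y z : ℕ, x * z = m ∧ y < z ∧ Nat.gcd (Nat.gcd x y) z = 1 ∧ Odd x ∧
    A = !![(x : ℝ), (y : ℝ); 0, (z : ℝ)]}

/-!
Since `w₂` normalises `Γ₀(2)`, right multiplication by `Γ₀(2)` preserves
`Γ₀(2)⁺ = Γ₀(2) ∪ Γ₀(2)·w₂`. For `B ∈ Γ₀(2)`, write `diag(1,m)·B = U·[[x,y],[0,z]]` with
`U ∈ SL(2,ℤ)` and `0 ≤ y < z` (Hermite normal form). As `B₀₀` is odd, so is `x`, which forces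
`U ∈ Γ₀(2)`; and `gcd(x,y,z) = 1` because the first row of `B` is primitive. Conversely, prime
avoidance and a Bézout relation factor every `γ ∈ M₁^m` as `G·diag(1,m)·K` with `G, K ∈ Γ₀(2)`.
Disjointness: two Hermite normal forms related by `SL(2,ℤ)` coincide, and the coset `Γ₀(2)·w₂`
cannot relate them, because after comparing determinants an integer entry would equal an integer
divided by `√2`.
-/

open Matrix CongruenceSubgroup MatrixGroups

abbrev castMat : Matrix (Fin 2) (Fin 2) ℤ →+* M2R := (Int.castRingHom ℝ).mapMatrix

lemma castMat_of (a b c d : ℤ) : castMat !![a, b; c, d] = !![(a : ℝ), b; c, d] := by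
  ext i j; fin_cases i <;> fin_cases j <;> rfl

lemma castMat_det (P : Matrix (Fin 2) (Fin 2) ℤ) : (castMat P).det = P.det :=
  (RingHom.map_det _ P).symm

lemma castMat_diag (m : ℕ) : !![(1 : ℝ), 0; 0, (m : ℝ)] = castMat !![1, 0; 0, (m : ℤ)] := by
  rw [castMat_of]; simp

lemma mem_Gamma0_two_iff {g : SL(2, ℤ)} : g ∈ Gamma0 2 ↔ (2 : ℤ) ∣ g 1 0 :=
  Gamma0_mem.trans (ZMod.intCast_zmod_eq_zero_iff_dvd _ 2)

lemma odd_apply_zero_zero_of_mem_Gamma0_two {g : SL(2, ℤ)} (hg : g ∈ Gamma0 2) :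
    Odd (g 0 0) := by
  obtain ⟨k, hk⟩ := mem_Gamma0_two_iff.1 hg
  have hdet : g 0 0 * g 1 1 - g 0 1 * g 1 0 = 1 := by rw [← det_fin_two]; exact g.det_coe
  have hodd : Odd (g 0 0 * g 1 1) := ⟨g 0 1 * k, by linear_combination hdet + g 0 1 * hk⟩
  exact (Int.odd_mul.1 hodd).1

lemma isGamma0Two_iff {A : M2R} : IsGamma0Two A ↔ ∃ g ∈ Gamma0 2, A = castMat g := by
  constructor
  · rintro ⟨B, rfl, hdet, h2⟩
    exact ⟨⟨B, hdet⟩, mem_Gamma0_two_iff.2 h2, rfl⟩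
  · rintro ⟨g, hg, rfl⟩
    exact ⟨g, rfl, g.2, mem_Gamma0_two_iff.1 hg⟩

lemma w2mat_eq : w2mat = (√2)⁻¹ • castMat !![0, -1; 2, 0] := by
  rw [w2mat, castMat_of]; norm_num

lemma det_w2mat : w2mat.det = 1 := by
  rw [w2mat_eq, det_smul, castMat_det, det_fin_two_of, Fintype.card_fin, inv_pow,
    Real.sq_sqrt zero_le_two]
  norm_num

lemma w2mat_mul_castMat (a b c d : ℤ) :
    w2mat * castMat !![a, b; 2 * c, d] = castMat !![d, -c; -2 * b, a] * w2mat := by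
  rw [w2mat, castMat_of, castMat_of, Matrix.mul_smul, Matrix.smul_mul]
  congr 1
  ext i j; fin_cases i <;> fin_cases j <;> simp <;> ring

lemma exists_gamma0_w2mat_mul {g : SL(2, ℤ)} (hg : g ∈ Gamma0 2) :
    ∃ g' ∈ Gamma0 2, w2mat * castMat g = castMat g' * w2mat := by
  obtain ⟨c, hc⟩ := mem_Gamma0_two_iff.1 hg
  have hg_eq : (g : Matrix (Fin 2) (Fin 2) ℤ) = !![g 0 0, g 0 1; 2 * c, g 1 1] := by
    rw [← hc]; exact eta_fin_two _
  have hdet : g 0 0 * g 1 1 - g 0 1 * (2 * c) = 1 := by rw [← hc, ← det_fin_two]; exact g.det_coe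
  refine ⟨⟨!![g 1 1, -c; -2 * g 0 1, g 0 0], by rw [det_fin_two_of]; linear_combination hdet⟩,
    mem_Gamma0_two_iff.2 ⟨-g 0 1, by simp⟩, ?_⟩
  have hconj := w2mat_mul_castMat (g 0 0) (g 0 1) c (g 1 1)
  rwa [← hg_eq] at hconj

lemma IsGamma0TwoPlus.mul_castMat {A : M2R} (hA : IsGamma0TwoPlus A) {g : SL(2, ℤ)}
    (hg : g ∈ Gamma0 2) : IsGamma0TwoPlus (A * castMat g) := by
  rcases hA with hA | ⟨B, hB, rfl⟩
  · obtain ⟨h, hh, rfl⟩ := isGamma0Two_iff.1 hA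
    exact Or.inl (isGamma0Two_iff.2 ⟨h * g, mul_mem hh hg, (map_mul _ _ _).symm⟩)
  · obtain ⟨h, hh, rfl⟩ := isGamma0Two_iff.1 hB
    obtain ⟨g', hg', hconj⟩ := exists_gamma0_w2mat_mul hg
    refine Or.inr ⟨castMat (h * g'), isGamma0Two_iff.2 ⟨_, mul_mem hh hg', rfl⟩, ?_⟩
    rw [mul_assoc, hconj, map_mul, mul_assoc]

lemma projEq.eq_of_det_eq {A B : M2R} (h : projEq A B) (hdet : A.det = B.det) (hB : B.det ≠ 0) :
    A = B := by
  obtain ⟨c, hc, rfl⟩ := h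
  rw [det_smul, Fintype.card_fin] at hdet
  have hc1 : c ^ 2 = 1 := mul_right_cancel₀ hB (hdet.trans (one_mul _).symm)
  rw [(pow_eq_one_iff_of_nonneg hc.le two_ne_zero).1 hc1, one_smul]

lemma castMat_ne_inv_sqrt_two_smul {P K : Matrix (Fin 2) (Fin 2) ℤ} (hP : P 0 0 ≠ 0) :
    castMat P ≠ (√2)⁻¹ • castMat K := by
  intro h
  have h00 : (P 0 0 : ℝ) = (√2)⁻¹ * K 0 0 := congrFun (congrFun h 0) 0
  apply irrational_sqrt_two
  refine ⟨K 0 0 / P 0 0, ?_⟩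
  have hP' : (P 0 0 : ℝ) ≠ 0 := by exact_mod_cast hP
  push_cast
  field_simp at h00 ⊢
  linarith

lemma mem_M1Set_iff {m : ℕ} {γ : M2R} : γ ∈ M1Set m ↔ ∃ x y z : ℕ, x * z = m ∧ y < z ∧
    Nat.gcd (Nat.gcd x y) z = 1 ∧ Odd x ∧ γ = castMat !![(x : ℤ), y; 0, z] := by
  simp only [M1Set, Set.mem_ofPred_eq, castMat_of, Int.cast_natCast, Int.cast_zero]

lemma FixedDetMatrices.exists_eq_smul_mem_reps {m : ℤ} (hm : m ≠ 0)
    (A : FixedDetMatrix (Fin 2) ℤ m) : ∃ g : SL(2, ℤ), ∃ R ∈ reps m, A = g • R := by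
  induction A using FixedDetMatrices.induction_on hm with
  | h0 A h₁ h₂ h₃ h₄ => exact ⟨1, A, ⟨h₁, h₂, h₃, h₄⟩, (one_smul _ _).symm⟩
  | hS B ih =>
    obtain ⟨g, R, hR, rfl⟩ := ih
    exact ⟨ModularGroup.S * g, R, hR, (mul_smul _ _ _).symm⟩
  | hT B ih =>
    obtain ⟨g, R, hR, rfl⟩ := ih
    exact ⟨ModularGroup.T * g, R, hR, (mul_smul _ _ _).symm⟩

lemma Nat.gcd_gcd_eq_one_of_isCoprime {x y z : ℕ} {u v : ℤ}
    (h : IsCoprime (u * x) (u * y + v * z)) : Nat.gcd (Nat.gcd x y) z = 1 := by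
  set d := Nat.gcd (Nat.gcd x y) z
  have hdx : (d : ℤ) ∣ x := by exact_mod_cast (Nat.gcd_dvd_left _ _).trans (Nat.gcd_dvd_left _ _)
  have hdy : (d : ℤ) ∣ y := by exact_mod_cast (Nat.gcd_dvd_left _ _).trans (Nat.gcd_dvd_right _ _)
  have hdz : (d : ℤ) ∣ z := by exact_mod_cast Nat.gcd_dvd_right _ _
  have hd := h.isUnit_of_dvd' (hdx.mul_left u) (dvd_add (hdy.mul_left u) (hdz.mul_left v))
  simpa using Int.isUnit_iff_natAbs_eq.1 hd

lemma exists_gamma0_mul_upperTriangular {m : ℕ} (hm : 0 < m) {B : SL(2, ℤ)}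
    (hB : B ∈ Gamma0 2) :
    ∃ U ∈ Gamma0 2, ∃ x y z : ℕ, x * z = m ∧ y < z ∧ Nat.gcd (Nat.gcd x y) z = 1 ∧ Odd x ∧
      !![1, 0; 0, (m : ℤ)] * B = U * !![(x : ℤ), y; 0, z] := by
  set M : Matrix (Fin 2) (Fin 2) ℤ := !![1, 0; 0, (m : ℤ)] * B with hM_def
  have hMdet : M.det = m := by rw [hM_def, det_mul, det_fin_two_of, B.det_coe]; ring
  obtain ⟨U, ⟨R, hRdet⟩, ⟨hR10, hR00, hR01, hR01'⟩, hMR⟩ :=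
    FixedDetMatrices.exists_eq_smul_mem_reps (by positivity) ⟨M, hMdet⟩
  replace hMR : M = U * R := congrArg Subtype.val hMR
  have hR : R = !![R 0 0, R 0 1; 0, R 1 1] := by rw [← hR10]; exact eta_fin_two R
  rw [hR, det_fin_two_of, mul_zero, sub_zero] at hRdet
  rw [hR] at hMR
  have hR11 : 0 < R 1 1 := by nlinarith
  rw [abs_of_pos hR11, abs_of_nonneg hR01] at hR01'
  lift R 0 0 to ℕ using hR00.le with x
  lift R 0 1 to ℕ using hR01 with y
  lift R 1 1 to ℕ using hR11.le with z
  have hM_entry (i j : Fin 2) : M i j =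
      U i 0 * !![(x : ℤ), y; 0, z] 0 j + U i 1 * !![(x : ℤ), y; 0, z] 1 j := by
    rw [hMR, Matrix.mul_apply, Fin.sum_univ_two]
  have hM00 : B 0 0 = U 0 0 * x := by simpa [hM_def, vecMul, dotProduct] using hM_entry 0 0
  have hM01 : B 0 1 = U 0 0 * y + U 0 1 * z := by
    simpa [hM_def, vecMul, dotProduct] using hM_entry 0 1
  have hM10 : m * B 1 0 = U 1 0 * x := by simpa [hM_def, vecMul, dotProduct] using hM_entry 1 0
  have hx : Odd (x : ℤ) := (Int.odd_mul.1 (hM00 ▸ odd_apply_zero_zero_of_mem_Gamma0_two hB)).2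
  have hU10 : (2 : ℤ) ∣ U 1 0 :=
    (Int.prime_two.dvd_mul.1 (hM10 ▸ (mem_Gamma0_two_iff.1 hB).mul_left _)).resolve_right
      (by rwa [← even_iff_two_dvd, Int.not_even_iff_odd])
  have hBdet : B 0 0 * B 1 1 - B 0 1 * B 1 0 = 1 := by rw [← det_fin_two]; exact B.det_coe
  have hrow : IsCoprime (B 0 0) (B 0 1) := ⟨B 1 1, -B 1 0, by linear_combination hBdet⟩
  rw [hM00, hM01] at hrow
  exact ⟨U, mem_Gamma0_two_iff.2 hU10, x, y, z, by exact_mod_cast hRdet,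
    by exact_mod_cast hR01', Nat.gcd_gcd_eq_one_of_isCoprime hrow, by exact_mod_cast hx, hMR⟩

theorem Nat.exists_coprime_mul_add {a b n : ℕ} (hn : n ≠ 0) (h : Nat.gcd (Nat.gcd a b) n = 1) :
    ∃ p, Nat.Coprime p b ∧ Nat.Coprime (p * a + b) n := by
  classical
  set P := n.primeFactors.filter (¬ · ∣ b)
  have hPb : Nat.Coprime (∏ q ∈ P, q) b := Nat.Coprime.prod_left fun q hq =>
    (Nat.Prime.coprime_iff_not_dvd (Nat.prime_of_mem_primeFactors (Finset.mem_filter.1 hq).1)).2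
      (Finset.mem_filter.1 hq).2
  refine ⟨∏ q ∈ P, q, hPb, Nat.coprime_of_dvd fun q hq hqab hqn => ?_⟩
  by_cases hqb : q ∣ b
  · have hqa : ¬ q ∣ a := fun hqa =>
      hq.one_lt.ne' (Nat.dvd_one.1 (h ▸ Nat.dvd_gcd (Nat.dvd_gcd hqa hqb) hqn))
    have hqP : ¬ q ∣ ∏ q ∈ P, q := fun hqP =>
      hq.one_lt.ne' (Nat.dvd_one.1 (hPb ▸ Nat.dvd_gcd hqP hqb))
    exact hq.not_dvd_mul hqP hqa ((Nat.dvd_add_left hqb).1 hqab)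
  · have hqP : q ∣ ∏ q ∈ P, q :=
      Finset.dvd_prod_of_mem _ (Finset.mem_filter.2 ⟨Nat.mem_primeFactors.2 ⟨hq, hqn, hn⟩, hqb⟩)
    exact hqb ((Nat.dvd_add_right (hqP.mul_right a)).1 hqab)

lemma exists_gamma0_factorization {m x y z : ℕ} (hxz : x * z = m) (hx : Odd x) (hz : z ≠ 0)
    (hgcd : Nat.gcd (Nat.gcd x y) z = 1) :
    ∃ G ∈ Gamma0 2, ∃ K ∈ Gamma0 2, !![(x : ℤ), y; 0, z] = G * !![1, 0; 0, (m : ℤ)] * K := by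
  have hgcd₂ : Nat.gcd (Nat.gcd x (2 * y)) z = 1 := by
    rwa [Nat.Coprime.gcd_mul_left_cancel_right y (Nat.coprime_two_left.2 hx)]
  obtain ⟨p, hp2y, hpz⟩ := Nat.exists_coprime_mul_add hz hgcd₂
  have hp : Odd p := Nat.coprime_two_right.1 (hp2y.coprime_dvd_right (dvd_mul_right 2 y))
  have he : Odd (p * x + 2 * y) := (hp.mul hx).add_even (even_two_mul y)
  obtain ⟨s, q, hbez⟩ := Nat.isCoprime_iff_coprime.2 ((Nat.coprime_two_right.2 he).mul_right hpz)
  push_cast at hbez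
  -- `p` makes `e = p x + 2 y` coprime to `2 z`, and the Bézout relation `s e + q (2 z) = 1`
  -- makes both factors below unimodular.
  refine ⟨⟨!![p * x + 2 * y, -q; 2 * z, s], ?_⟩, mem_Gamma0_two_iff.2 ?_,
    ⟨!![x * s, y * s + z * q; -2, p], ?_⟩, mem_Gamma0_two_iff.2 ?_, ?_⟩
  · rw [det_fin_two_of]; linear_combination hbez
  · exact ⟨z, by simp⟩
  · rw [det_fin_two_of]; linear_combination hbez
  · exact ⟨-1, by simp⟩
  · rw [← hxz]; push_cast
    ext i j; fin_cases i <;> fin_cases j <;> simp [Matrix.mul_apply, Fin.sum_univ_two]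
    · linear_combination -(x : ℤ) * hbez
    · linear_combination -(y : ℤ) * hbez
    · ring
    · linear_combination -(z : ℤ) * hbez

lemma eq_one_of_mul_upperTriangular {B : SL(2, ℤ)} {x y z x' y' z' : ℕ} (hx : 0 < x)
    (hx' : 0 < x') (hy : y < z) (hy' : y' < z')
    (h : B * !![(x : ℤ), y; 0, z] = !![(x' : ℤ), y'; 0, z']) : B = 1 := by
  have hent (i j : Fin 2) :
      B i 0 * !![(x : ℤ), y; 0, z] 0 j + B i 1 * !![(x : ℤ), y; 0, z] 1 j =
        !![(x' : ℤ), y'; 0, z'] i j := by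
    rw [← h, Matrix.mul_apply, Fin.sum_univ_two]
  have e00 := hent 0 0
  have e01 := hent 0 1
  have e10 := hent 1 0
  have e11 := hent 1 1
  simp only [of_apply, cons_val', cons_val_zero, cons_val_one, empty_val', cons_val_fin_one,
    mul_zero, add_zero] at e00 e01 e10 e11
  have hB10 : B 1 0 = 0 := (mul_eq_zero.1 e10).resolve_right (by positivity)
  have hdet : B 0 0 * B 1 1 = 1 := by
    have := B.det_coe
    rwa [det_fin_two, hB10, mul_zero, sub_zero] at this
  have hB00_pos : 0 < B 0 0 * x := by rw [e00]; positivity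
  have hB00 : B 0 0 = 1 :=
    Int.eq_one_of_mul_eq_one_right (pos_of_mul_pos_left hB00_pos (by positivity)).le hdet
  have hB11 : B 1 1 = 1 := by rwa [hB00, one_mul] at hdet
  rw [hB00, one_mul] at e01
  rw [hB10, hB11, zero_mul, zero_add, one_mul] at e11
  have hB01 : B 0 1 = 0 := by
    have hlt : |B 0 1 * z| < z := abs_lt.2 ⟨by omega, by omega⟩
    exact (mul_eq_zero.1 (Int.eq_zero_of_abs_lt_dvd (dvd_mul_left _ _) hlt)).resolve_right
      (by omega)
  ext i j
  fin_cases i <;> fin_cases j <;> simp [hB00, hB01, hB10, hB11]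

lemma exists_mem_M1Set_of_mem_doubleCoset {m : ℕ} (hm : 0 < m) {A g₁ g₂ : M2R}
    (hg₁ : IsGamma0TwoPlus g₁) (hg₂ : IsGamma0Two g₂)
    (hA : projEq A (g₁ * !![(1 : ℝ), 0; 0, (m : ℝ)] * g₂)) :
    ∃ γ ∈ M1Set m, ∃ g : M2R, IsGamma0TwoPlus g ∧ projEq A (g * γ) := by
  obtain ⟨B, hB, rfl⟩ := isGamma0Two_iff.1 hg₂
  obtain ⟨U, hU, x, y, z, hxz, hyz, hgcd, hx, hDB⟩ := exists_gamma0_mul_upperTriangular hm hB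
  refine ⟨_, mem_M1Set_iff.2 ⟨x, y, z, hxz, hyz, hgcd, hx, rfl⟩, g₁ * castMat U,
    hg₁.mul_castMat hU, ?_⟩
  rwa [castMat_diag, mul_assoc, ← map_mul, hDB, map_mul, ← mul_assoc] at hA

lemma mem_doubleCoset_of_mem_M1Set {m : ℕ} {A γ g : M2R} (hγ : γ ∈ M1Set m)
    (hg : IsGamma0TwoPlus g) (hA : projEq A (g * γ)) :
    ∃ g₁ g₂ : M2R, IsGamma0TwoPlus g₁ ∧ IsGamma0Two g₂ ∧
      projEq A (g₁ * !![(1 : ℝ), 0; 0, (m : ℝ)] * g₂) := by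
  obtain ⟨x, y, z, hxz, hyz, hgcd, hx, rfl⟩ := mem_M1Set_iff.1 hγ
  obtain ⟨G, hG, K, hK, hGDK⟩ := exists_gamma0_factorization hxz hx (by omega) hgcd
  refine ⟨g * castMat G, castMat K, hg.mul_castMat hG, isGamma0Two_iff.2 ⟨K, hK, rfl⟩, ?_⟩
  rw [hGDK, map_mul, map_mul, ← castMat_diag] at hA
  simpa only [mul_assoc] using hA

lemma eq_of_mem_M1Set_of_projEq {m : ℕ} {γ γ' g : M2R} (hγ : γ ∈ M1Set m) (hγ' : γ' ∈ M1Set m)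
    (hg : IsGamma0TwoPlus g) (h : projEq γ' (g * γ)) : γ = γ' := by
  obtain ⟨x, y, z, hxz, hyz, -, hx, rfl⟩ := mem_M1Set_iff.1 hγ
  obtain ⟨x', y', z', hxz', hyz', -, hx', rfl⟩ := mem_M1Set_iff.1 hγ'
  have hm : (m : ℝ) ≠ 0 := Nat.cast_ne_zero.2 (hxz ▸ mul_ne_zero hx.pos.ne' (by omega))
  have hdet : (castMat !![(x : ℤ), y; 0, z]).det = m := by
    rw [castMat_det, det_fin_two_of, ← hxz]; push_cast; ring
  have hdet' : (castMat !![(x' : ℤ), y'; 0, z']).det = m := by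
    rw [castMat_det, det_fin_two_of, ← hxz']; push_cast; ring
  rcases hg with hg | ⟨B, hB, rfl⟩
  · obtain ⟨C, -, rfl⟩ := isGamma0Two_iff.1 hg
    have hdetC : (castMat C * castMat !![(x : ℤ), y; 0, z]).det = m := by
      rw [det_mul, hdet, castMat_det, C.det_coe, Int.cast_one, one_mul]
    have heq := h.eq_of_det_eq (hdet'.trans hdetC.symm) (hdetC ▸ hm)
    rw [← map_mul] at heq
    have hCT := (Matrix.map_injective Int.cast_injective heq).symm
    rw [heq, eq_one_of_mul_upperTriangular hx.pos hx'.pos hyz hyz' hCT]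
    simp
  · obtain ⟨C, -, rfl⟩ := isGamma0Two_iff.1 hB
    have hdetC : (castMat C * w2mat * castMat !![(x : ℤ), y; 0, z]).det = m := by
      rw [det_mul, det_mul, hdet, det_w2mat, castMat_det, C.det_coe, Int.cast_one, one_mul, one_mul]
    have heq := h.eq_of_det_eq (hdet'.trans hdetC.symm) (hdetC ▸ hm)
    rw [w2mat_eq, mul_smul_comm, smul_mul_assoc, ← map_mul, ← map_mul] at heq
    exact absurd heq (castMat_ne_inv_sqrt_two_smul (by simpa using hx'.pos.ne'))

theorem double_coset_decomposition_M1_general (m : ℕ) (hm : 0 < m) :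
    (∀ A : M2R,
      (∃ g₁ g₂ : M2R, IsGamma0TwoPlus g₁ ∧ IsGamma0Two g₂ ∧
        projEq A (g₁ * !![(1 : ℝ), 0; 0, (m : ℝ)] * g₂))
      ↔ ∃ γ ∈ M1Set m, ∃ g : M2R, IsGamma0TwoPlus g ∧ projEq A (g * γ))
    ∧ ∀ γ ∈ M1Set m, ∀ γ' ∈ M1Set m,
        (∃ g : M2R, IsGamma0TwoPlus g ∧ projEq γ' (g * γ)) → γ = γ' :=
  ⟨fun _ => ⟨fun ⟨_, _, hg₁, hg₂, hA⟩ => exists_mem_M1Set_of_mem_doubleCoset hm hg₁ hg₂ hA,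
      fun ⟨_, hγ, _, hg, hA⟩ => mem_doubleCoset_of_mem_M1Set hγ hg hA⟩,
    fun _ hγ _ hγ' ⟨_, hg, h⟩ => eq_of_mem_M1Set_of_projEq hγ hγ' hg h⟩

/-- For `m` even, the double coset `Γ₀(2)⁺·[[1,0],[0,m]]·Γ₀(2)` is the disjoint union
of the left cosets `Γ₀(2)⁺·γ` for `γ ∈ M₁^m` (all equalities of cosets taken in
`PSL(2,ℝ)`, i.e. up to positive scalars). -/
theorem double_coset_decomposition_M1 (m : ℕ) (hm : 0 < m) (hme : Even m) :
    (∀ A : M2R,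
      (∃ g₁ g₂ : M2R, IsGamma0TwoPlus g₁ ∧ IsGamma0Two g₂ ∧
        projEq A (g₁ * !![(1 : ℝ), 0; 0, (m : ℝ)] * g₂))
      ↔ ∃ γ ∈ M1Set m, ∃ g : M2R, IsGamma0TwoPlus g ∧ projEq A (g * γ))
    ∧ ∀ γ ∈ M1Set m, ∀ γ' ∈ M1Set m,
        (∃ g : M2R, IsGamma0TwoPlus g ∧ projEq γ' (g * γ)) → γ = γ' :=
  double_coset_decomposition_M1_general m hm
end
end

section
/- Let m be a positive even integer and w₂ = 2^{-1/2}[[0,-1],[2,0]]. For every matrix γ = [[x,y],[0,z]] with xz = m, 0 ≤ y < z, gcd(x,y,z) = 1 and z odd, the product γ·w₂ is equal, up to left multiplication by an element of Γ₀(2)⁺, to a matrix [[x',y'],[0,z']] with x'z' = m, 0 ≤ y' < z', gcd(x',y',z') = 1 and x' odd. -/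
noncomputable section

/-- For `m` even and `γ = [[x,y],[0,z]]` with `xz = m`, `0 ≤ y < z`, `gcd(x,y,z)=1`
and `z` odd, the product `γ·w₂` equals, up to left multiplication by an element of
`Γ₀(2)⁺` and up to a positive scalar, a matrix `[[x',y'],[0,z']]` with `x'z' = m`,
`0 ≤ y' < z'`, `gcd(x',y',z') = 1` and `x'` odd. -/
theorem fricke_sends_S1_to_M1 (m : ℕ) (hm : 0 < m) (hme : Even m) (x y z : ℕ)
    (hxz : x * z = m) (hyz : y < z) (hgcd : Nat.gcd (Nat.gcd x y) z = 1) (hz : Odd z) :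
    ∃ g : M2R, IsGamma0TwoPlus g ∧ ∃ x' y' z' : ℕ,
      x' * z' = m ∧ y' < z' ∧ Nat.gcd (Nat.gcd x' y') z' = 1 ∧ Odd x' ∧
      projEq (g * (!![(x : ℝ), (y : ℝ); 0, (z : ℝ)] * w2mat))
        !![(x' : ℝ), (y' : ℝ); 0, (z' : ℝ)] := by
  have hz0 : 0 < z := lt_of_le_of_lt (Nat.zero_le y) hyz
  have hx0 : 0 < x := by
    rcases Nat.eq_zero_or_pos x with h | h
    · subst h; simp at hxz; omega
    · exact h
  set t := Nat.gcd y z with ht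
  have ht0 : 0 < t := Nat.gcd_pos_of_pos_right _ hz0
  set u := y / t with hu
  set v := z / t with hv
  have hyu : t * u = y := Nat.mul_div_cancel' (Nat.gcd_dvd_left y z)
  have hzv : t * v = z := Nat.mul_div_cancel' (Nat.gcd_dvd_right y z)
  have hv0 : 0 < v := by
    rcases Nat.eq_zero_or_pos v with h | h
    · rw [h, Nat.mul_zero] at hzv; omega
    · exact h
  have hz2 : ¬ (2 ∣ z) := by rw [Nat.odd_iff] at hz; omega
  have htodd : Odd t := by
    rw [Nat.odd_iff]
    by_contra h
    exact hz2 (dvd_trans (by omega : (2:ℕ) ∣ t) ⟨v, hzv.symm⟩)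
  have hvodd : Odd v := by
    rw [Nat.odd_iff]
    by_contra h
    exact hz2 (dvd_trans (by omega : (2:ℕ) ∣ v) ⟨t, by rw [← hzv, Nat.mul_comm]⟩)
  have huv : Nat.Coprime u v := Nat.coprime_div_gcd_div_gcd ht0
  have h2v : Nat.Coprime 2 v := Nat.coprime_two_left.mpr hvodd
  have hcop : Nat.Coprime (2 * u) v := Nat.Coprime.mul h2v huv
  -- Bezout
  have hgab := Int.gcd_eq_gcd_ab (2 * u : ℤ) (v : ℤ)
  have hgcd1 : Int.gcd (2 * u : ℤ) (v : ℤ) = 1 := by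
    have : ((2 * u : ℕ) : ℤ) = (2 * u : ℤ) := by push_cast; ring
    rw [← this, Int.gcd_natCast_natCast]
    exact hcop
  rw [hgcd1] at hgab
  set b0 := Int.gcdA (2 * u : ℤ) (v : ℤ) with hb0
  set a0 := Int.gcdB (2 * u : ℤ) (v : ℤ) with ha0
  -- a0 * v + 2 * u * b0 = 1
  set A0 : ℤ := -a0 with hA0
  -- -A0 * v + 2 * b0 * u = 1
  have hdet0 : -A0 * (v : ℤ) + 2 * b0 * (u : ℤ) = 1 := by
    rw [hA0]; push_cast at hgab ⊢; linarith [hgab]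
  set k : ℤ := -((-b0 * (x : ℤ)) / ((x : ℤ) * (v : ℤ))) with hk
  set A : ℤ := A0 - 2 * k * u with hA
  set Bb : ℤ := b0 - k * v with hBb
  have hdet : -A * (v : ℤ) + 2 * Bb * (u : ℤ) = 1 := by
    rw [hA, hBb]; ring_nf; ring_nf at hdet0; linarith
  set y'int : ℤ := (-b0 * (x : ℤ)) % ((x : ℤ) * (v : ℤ)) with hy'
  have hxv0 : (0 : ℤ) < (x : ℤ) * (v : ℤ) := by positivity
  have hy'nonneg : 0 ≤ y'int := Int.emod_nonneg _ (by omega)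
  have hy'lt : y'int < (x : ℤ) * (v : ℤ) := Int.emod_lt_of_pos _ hxv0
  have hy'eq : Bb * (-(x : ℤ)) = y'int := by
    rw [hBb, hy', Int.emod_def, hk]; ring
  set y'n : ℕ := y'int.toNat with hy'n
  have hy'cast : (y'n : ℤ) = y'int := Int.toNat_of_nonneg hy'nonneg
  -- the matrix
  set Bz : Matrix (Fin 2) (Fin 2) ℤ := !![A, Bb; -(2 * u), -(v : ℤ)] with hBz
  have hBzdet : Bz.det = 1 := by
    rw [hBz, Matrix.det_fin_two_of]; linarith [hdet]
  refine ⟨(Bz.map (fun x => (x : ℝ))) * w2mat, ?_, t, y'n, x * v, ?_, ?_, ?_, htodd, ?_⟩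
  · refine Or.inr ⟨Bz.map (fun x => (x : ℝ)), ⟨Bz, rfl, hBzdet, ⟨-(u : ℤ), ?_⟩⟩, rfl⟩
    have hB10 : Bz 1 0 = -(2 * u) := by rw [hBz]; simp
    rw [hB10]; ring
  · -- x' * z' = m
    calc t * (x * v) = x * (t * v) := by ring
    _ = x * z := by rw [hzv]
    _ = m := hxz
  · -- y' < z'
    have : (y'n : ℤ) < ((x * v : ℕ) : ℤ) := by rw [hy'cast]; push_cast; exact hy'lt
    exact_mod_cast this
  · -- gcd
    by_contra hne
    obtain ⟨p, hp, hpd⟩ := Nat.exists_prime_and_dvd hne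
    have hpt : p ∣ t := dvd_trans (dvd_trans hpd (Nat.gcd_dvd_left _ _)) (Nat.gcd_dvd_left _ _)
    have hpy' : p ∣ y'n := dvd_trans (dvd_trans hpd (Nat.gcd_dvd_left _ _)) (Nat.gcd_dvd_right _ _)
    have hpxv : p ∣ x * v := dvd_trans hpd (Nat.gcd_dvd_right _ _)
    have hpy : p ∣ y := hpt.trans (Nat.gcd_dvd_left y z)
    have hpz : p ∣ z := hpt.trans (Nat.gcd_dvd_right y z)
    have hpx : ¬ p ∣ x := by
      intro h
      have : p ∣ Nat.gcd (Nat.gcd x y) z := Nat.dvd_gcd (Nat.dvd_gcd h hpy) hpz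
      rw [hgcd] at this
      exact hp.ne_one (Nat.dvd_one.mp this)
    have hpv : p ∣ v := (hp.dvd_mul.mp hpxv).resolve_left hpx
    have hpint : Prime (p : ℤ) := Nat.prime_iff_prime_int.mp hp
    have hpBx : (p : ℤ) ∣ Bb * (-(x : ℤ)) := by
      rw [hy'eq, ← hy'cast]
      exact_mod_cast Int.natCast_dvd_natCast.mpr hpy'
    have hpBb : (p : ℤ) ∣ Bb := by
      rcases hpint.dvd_mul.mp hpBx with h | h
      · exact h
      · exfalso
        exact hpx (Int.natCast_dvd_natCast.mp ((Int.dvd_neg.mp h)))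
    have hpvz : (p : ℤ) ∣ (v : ℤ) := Int.natCast_dvd_natCast.mpr hpv
    have : (p : ℤ) ∣ 1 := by
      rw [← hdet]
      exact dvd_add (Dvd.dvd.mul_left hpvz (-A)) (Dvd.dvd.mul_right (Dvd.dvd.mul_left hpBb 2) _)
    exact hp.ne_one (by exact_mod_cast Int.eq_one_of_dvd_one (by norm_num) this)
  · -- projEq
    refine ⟨1, one_pos, ?_⟩
    rw [one_smul]
    have hsq : (Real.sqrt 2)⁻¹ * (Real.sqrt 2)⁻¹ = 2⁻¹ := by
      rw [← mul_inv, Real.mul_self_sqrt (by norm_num)]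
    have hw : w2mat * (!![(x : ℝ), (y : ℝ); 0, (z : ℝ)] * w2mat)
        = !![-(z : ℝ), 0; 2 * y, -(x : ℝ)] := by
      rw [w2mat, Matrix.smul_mul, Matrix.mul_smul, Matrix.mul_smul, smul_smul, hsq]
      ext i j
      fin_cases i <;> fin_cases j <;>
        simp [Matrix.mul_apply, Fin.sum_univ_two] <;> ring
    have hassoc : (Bz.map (fun x => (x : ℝ))) * w2mat * (!![(x : ℝ), (y : ℝ); 0, (z : ℝ)] * w2mat)
        = (Bz.map (fun x => (x : ℝ))) * !![-(z : ℝ), 0; 2 * y, -(x : ℝ)] := by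
      rw [mul_assoc, hw]
    rw [hassoc]
    -- integer identities
    have hyuZ : (t : ℤ) * (u : ℤ) = (y : ℤ) := by exact_mod_cast hyu
    have hzvZ : (t : ℤ) * (v : ℤ) = (z : ℤ) := by exact_mod_cast hzv
    have e00 : A * (-(z : ℤ)) + Bb * (2 * y) = (t : ℤ) := by
      rw [← hyuZ, ← hzvZ]; linear_combination (t : ℤ) * hdet
    have e01 : A * 0 + Bb * (-(x : ℤ)) = (y'n : ℤ) := by rw [hy'cast]; linarith [hy'eq]
    have e10 : (-(2 * u : ℤ)) * (-(z : ℤ)) + (-(v : ℤ)) * (2 * y) = 0 := by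
      rw [← hyuZ, ← hzvZ]; ring
    have e11 : (-(2 * u : ℤ)) * 0 + (-(v : ℤ)) * (-(x : ℤ)) = ((x * v : ℕ) : ℤ) := by
      push_cast; ring
    ext i j
    fin_cases i <;> fin_cases j <;>
      simp [hBz, Matrix.mul_apply, Fin.sum_univ_two, Matrix.map_apply]
    · have := congrArg (Int.cast : ℤ → ℝ) e00; push_cast at this; linarith
    · have := congrArg (Int.cast : ℤ → ℝ) e01; push_cast at this; linarith
    · have := congrArg (Int.cast : ℤ → ℝ) e10; push_cast at this; linarith
    · have := congrArg (Int.cast : ℤ → ℝ) e11; push_cast at this; linarith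
end
end

section
/- Suppose f(q) = q^{-1} + Σ_{k≥1} a_k q^k is completely (2+)-replicable with replicates f^{[n]}. Then for every k ≥ 1: a_{4k+2} = Σ_{j=1}^{k} a_j·a_{2k+1-j} + a_{2k+2}. -/
noncomputable section

/-- Formal `q`-series with rational coefficients (Laurent series in `q`). -/
abbrev Ser := LaurentSeries ℚ

/-- `f = q⁻¹ + Σ_{k≥1} a_k q^k`: the coefficient of `q⁻¹` is `1` and all other
coefficients in non-positive degrees vanish. -/
def IsNormalized (f : Ser) : Prop :=
  f.coeff (-1) = 1 ∧ ∀ k : ℤ, k ≤ 0 → k ≠ -1 → f.coeff k = 0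

/-- `P` is the `n`-th Faber polynomial of `f`: the unique monic polynomial of degree
`n` such that `P(f(q)) − q^{-n}` has only positive powers of `q`. -/
def IsFaber (f : Ser) (n : ℕ) (P : Polynomial ℚ) : Prop :=
  P.Monic ∧ P.natDegree = n ∧
  (Polynomial.aeval f P).coeff (-(n : ℤ)) = 1 ∧
  ∀ k : ℤ, k ≤ 0 → k ≠ -(n : ℤ) → (Polynomial.aeval f P).coeff k = 0

/-- The coefficient of `q^k` in the left-hand side
`Σ_{ad=n, 0≤b<d} f^{[a]}((aτ+b)/d) + Σ_{ad=n, d even, 0≤b<d} f^{[a√2]}((2aτ+b)/d)`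
of the `(2+)`-replication identity, where `F a` is the series `f^{[a]}` and `G a`
is the series `f^{[a√2]}`. -/
def RepLHS (F G : ℕ → Ser) (n : ℕ) (k : ℤ) : ℚ :=
  (∑ x ∈ n.divisorsAntidiagonal,
    if (x.1 : ℤ) ∣ k then (x.2 : ℚ) * (F x.1).coeff ((x.2 : ℤ) * k / (x.1 : ℤ)) else 0)
  + (∑ x ∈ n.divisorsAntidiagonal,
    if Even x.2 ∧ (2 * (x.1 : ℤ)) ∣ k then
      (x.2 : ℚ) * (G x.1).coeff ((x.2 : ℤ) * k / (2 * (x.1 : ℤ))) else 0)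

/-- The `(2+)`-replication identity of index `n` for `f` with replicates
`F a = f^[a]`, `G a = f^[a√2]`, expressed on `q`-expansion coefficients:
`Σ_{ad=n, 0≤b<d} f^{[a]}((aτ+b)/d) + Σ_{ad=n, d even, 0≤b<d} f^{[a√2]}((2aτ+b)/d)
  = P_{n,f}(f(τ))`. -/
def RepEq (F G : ℕ → Ser) (f : Ser) (n : ℕ) : Prop :=
  ∀ P : Polynomial ℚ, IsFaber f n P →
    ∀ k : ℤ, RepLHS F G n k = (Polynomial.aeval f P).coeff k

/-- Multiplication on the index set `ℕ ∪ √2·ℕ`, encoding `(n, b)` as `n·(√2)^b`: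
`(√2·n)·(√2·m) = 2nm`. -/
def indexMul (r s : ℕ × Bool) : ℕ × Bool :=
  (r.1 * s.1 * (if r.2 ∧ s.2 then 2 else 1), xor r.2 s.2)

/-- `Φ` is a completely `(2+)`-replicable system: `Φ r` is the replicate `f^{[r]}` for
`r ∈ ℕ ∪ √2·ℕ`, and every `Φ r` is `(2+)`-replicable with `(Φ r)^{[m]} = Φ (r·m)`. -/
def IsCR2System (Φ : ℕ × Bool → Ser) : Prop :=
  ∀ r : ℕ × Bool, 1 ≤ r.1 → ∀ n : ℕ, 1 ≤ n →
    RepEq (fun a => Φ (indexMul r (a, false))) (fun a => Φ (indexMul r (a, true))) (Φ r) n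

/-- `f` is completely `(2+)`-replicable. -/
def Completely2PlusReplicable (f : Ser) : Prop :=
  ∃ Φ : ℕ × Bool → Ser, Φ (1, false) = f ∧ IsCR2System Φ

/-! The identity is the coefficient of `q^{2k+1}` in the replication identity of index `2` for
`f` itself. As `2k+1` is odd, the only surviving term on the left is `f(2τ)`, which contributes
`2 a_{4k+2}`. On the right, `P_{2,f} = X² - 2a₁` and the `q^{2k+1}`-coefficient of `f²` is
`2 a_{2k+2} + Σ_{i=1}^{2k} a_i a_{2k+1-i}`, a sum that is twice its first half by the symmetry
`i ↦ 2k+1-i`. -/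

open Finset Polynomial

open HahnSeries (single)

namespace LaurentSeries

variable {R : Type*} [Semiring R]

theorem coeff_mul_eq_sum_Icc {g h : LaurentSeries R} (hg : ∀ m ≤ 0, g.coeff m = 0)
    (hh : ∀ m ≤ 0, h.coeff m = 0) (n : ℤ) :
    (g * h).coeff n = ∑ i ∈ Icc 1 (n - 1), g.coeff i * h.coeff (n - i) := by
  let e : ℤ ↪ ℤ × ℤ :=
    ⟨fun i => (i, n - i), Function.LeftInverse.injective (g := Prod.fst) fun _ => rfl⟩
  rw [HahnSeries.coeff_mul]
  refine (sum_subset ?_ ?_).trans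
    (sum_map (Icc 1 (n - 1)) e fun ij => g.coeff ij.1 * h.coeff ij.2)
  · rintro ⟨i, j⟩ hij
    obtain ⟨hi, hj, rfl⟩ := Finset.mem_antidiagonal.mp hij
    have hi' : 0 < i := not_le.mp fun h0 => hi (hg i h0)
    have hj' : 0 < j := not_le.mp fun h0 => hj (hh j h0)
    exact mem_map.mpr ⟨i, mem_Icc.mpr ⟨hi', by omega⟩, Prod.ext rfl (add_sub_cancel_left i j)⟩
  · rintro _ hmap hnot
    obtain ⟨i, -, rfl⟩ := mem_map.mp hmap
    simp only [e, Function.Embedding.coeFn_mk] at hnot ⊢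
    simp only [Finset.mem_antidiagonal, HahnSeries.mem_support, add_sub_cancel, and_true,
      not_and_or, not_not] at hnot
    rcases hnot with h0 | h0 <;> simp [h0]

end LaurentSeries

theorem aeval_X_sq_sub_C_eq (f : Ser) (c : ℚ) : aeval f (X ^ 2 - C c) = f * f - single 0 c := by
  rw [map_sub, map_pow, aeval_X, aeval_C, sq,
    RingHom.congr_fun (Subsingleton.elim (algebraMap ℚ Ser) HahnSeries.C) c, HahnSeries.C_apply]

namespace IsNormalized

variable {f : Ser}

theorem coeff_sub_single_of_nonpos (hf : IsNormalized f) {m : ℤ} (hm : m ≤ 0) :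
    (f - single (-1) 1).coeff m = 0 := by
  rw [HahnSeries.coeff_sub, HahnSeries.coeff_single]
  split_ifs with h
  · rw [h, hf.1, sub_self]
  · rw [hf.2 m hm h, sub_zero]

theorem coeff_mul_self (hf : IsNormalized f) (m : ℤ) :
    (f * f).coeff m = (single (-2) 1 : Ser).coeff m + 2 * (f - single (-1) 1).coeff (m + 1)
      + ∑ i ∈ Icc 1 (m - 1), f.coeff i * f.coeff (m - i) := by
  set g := f - single (-1) 1
  have hg : ∀ m ≤ 0, g.coeff m = 0 := fun m hm => hf.coeff_sub_single_of_nonpos hm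
  have hgf : ∀ m ≠ -1, g.coeff m = f.coeff m := fun m hm => by
    rw [HahnSeries.coeff_sub, HahnSeries.coeff_single_of_ne hm, sub_zero]
  have hsg : (single (-1) 1 * g).coeff m = g.coeff (m + 1) := by
    simpa using HahnSeries.coeff_single_mul_add (r := (1 : ℚ)) (x := g) (a := m + 1) (b := -1)
  have hexp : f * f = single (-2) 1 + (single (-1) 1 * g + single (-1) 1 * g) + g * g := by
    have hss : single (-1) 1 * single (-1) 1 = (single (-2) 1 : Ser) := by
      rw [HahnSeries.single_mul_single]; norm_num
    rw [← hss, show f = single (-1) 1 + g by simp [g]]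
    ring
  have hgg : (g * g).coeff m = ∑ i ∈ Icc 1 (m - 1), f.coeff i * f.coeff (m - i) := by
    rw [LaurentSeries.coeff_mul_eq_sum_Icc hg hg]
    refine sum_congr rfl fun i hi => ?_
    rw [mem_Icc] at hi
    rw [hgf i (by omega), hgf (m - i) (by omega)]
  rw [hexp, HahnSeries.coeff_add, HahnSeries.coeff_add, HahnSeries.coeff_add, hsg, hgg, two_mul]

theorem coeff_aeval_faber_two_of_pos (hf : IsNormalized f) {m : ℤ} (hm : 0 < m) :
    (aeval f (X ^ 2 - C (2 * f.coeff 1))).coeff m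
      = 2 * f.coeff (m + 1) + ∑ i ∈ Icc 1 (m - 1), f.coeff i * f.coeff (m - i) := by
  rw [aeval_X_sq_sub_C_eq, HahnSeries.coeff_sub, hf.coeff_mul_self,
    HahnSeries.coeff_single_of_ne hm.ne', HahnSeries.coeff_single_of_ne (by omega),
    HahnSeries.coeff_sub, HahnSeries.coeff_single_of_ne (by omega)]
  ring

theorem isFaber_two (hf : IsNormalized f) : IsFaber f 2 (X ^ 2 - C (2 * f.coeff 1)) := by
  have hcoeff : ∀ m ≤ 0, (aeval f (X ^ 2 - C (2 * f.coeff 1))).coeff m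
      = (single (-2) 1 : Ser).coeff m := fun m hm => by
    rw [aeval_X_sq_sub_C_eq, HahnSeries.coeff_sub, hf.coeff_mul_self, Icc_eq_empty (by omega),
      sum_empty, add_zero]
    rcases eq_or_ne m 0 with rfl | hm0
    · rw [HahnSeries.coeff_single_same, HahnSeries.coeff_sub,
        HahnSeries.coeff_single_of_ne (show (0 : ℤ) + 1 ≠ -1 by omega), zero_add]
      ring
    · rw [HahnSeries.coeff_single_of_ne hm0, hf.coeff_sub_single_of_nonpos (by omega)]
      ring
  refine ⟨monic_X_pow_sub_C _ two_ne_zero, natDegree_X_pow_sub_C, ?_, fun m hm hne => ?_⟩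
  · rw [hcoeff _ (by omega), Nat.cast_ofNat, HahnSeries.coeff_single_same]
  · rw [hcoeff m hm, HahnSeries.coeff_single_of_ne (by simpa using hne)]

end IsNormalized

section IntervalSums

variable {R : Type*}

theorem sum_Icc_natCast [AddCommMonoid R] (u : ℤ → R) (a b : ℕ) :
    ∑ i ∈ Icc (a : ℤ) b, u i = ∑ j ∈ Icc a b, u j := by
  have hmap : Icc (a : ℤ) b = (Icc a b).map Nat.castEmbedding := by
    ext i
    simp only [mem_Icc, mem_map, Nat.castEmbedding_apply]
    constructor
    · intro hi; exact ⟨i.toNat, by omega, by omega⟩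
    · rintro ⟨j, hj, rfl⟩; omega
  rw [hmap, sum_map]
  rfl

theorem sum_Icc_mul_reflect [CommSemiring R] (u : ℤ → R) (n : ℤ) :
    ∑ i ∈ Icc 1 (2 * n), u i * u (2 * n + 1 - i)
      = 2 * ∑ i ∈ Icc 1 n, u i * u (2 * n + 1 - i) := by
  have hsplit : Icc 1 (2 * n) = Icc 1 n ∪ Icc (n + 1) (2 * n) := by
    ext i; simp only [mem_Icc, mem_union]; omega
  have hdisj : Disjoint (Icc 1 n) (Icc (n + 1) (2 * n)) :=
    disjoint_left.mpr fun i hi hi' => by rw [mem_Icc] at hi hi'; omega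
  have hreflect : ∑ i ∈ Icc (n + 1) (2 * n), u i * u (2 * n + 1 - i)
      = ∑ i ∈ Icc 1 n, u i * u (2 * n + 1 - i) := by
    refine sum_nbij' (2 * n + 1 - ·) (2 * n + 1 - ·) ?_ ?_ ?_ ?_ ?_
    · intro i hi; simp only [mem_Icc] at hi ⊢; omega
    · intro i hi; simp only [mem_Icc] at hi ⊢; omega
    · intro i _; ring
    · intro i _; ring
    · intro i _; rw [sub_sub_cancel, mul_comm]
  rw [hsplit, sum_union hdisj, hreflect]
  exact (two_mul _).symm

end IntervalSums

theorem repLHS_two_of_odd (F G : ℕ → Ser) {m : ℤ} (hm : Odd m) :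
    RepLHS F G 2 m = 2 * (F 1).coeff (2 * m) := by
  have hm2 : ¬ (2 : ℤ) ∣ m := Int.not_even_iff_odd.mpr hm ∘ even_iff_two_dvd.mpr
  rw [RepLHS, show Nat.divisorsAntidiagonal 2 = {(1, 2), (2, 1)} by decide,
    sum_pair (by decide), sum_pair (by decide)]
  simp [hm2]

theorem indexMul_one_false (s : ℕ × Bool) : indexMul (1, false) s = s := by
  simp [indexMul]

theorem Completely2PlusReplicable.exists_repEq {f : Ser} (hf : Completely2PlusReplicable f) :
    ∃ F G : ℕ → Ser, F 1 = f ∧ ∀ n, 1 ≤ n → RepEq F G f n := by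
  obtain ⟨Φ, hΦf, hΦ⟩ := hf
  refine ⟨fun a => Φ (a, false), fun a => Φ (a, true), hΦf, fun n hn => ?_⟩
  simpa only [indexMul_one_false, hΦf] using hΦ (1, false) le_rfl n hn

theorem coeff_four_k_add_two_general (f : Ser) (hnorm : IsNormalized f)
    (hf : Completely2PlusReplicable f) (k : ℕ) :
    f.coeff (4 * (k : ℤ) + 2)
      = (∑ j ∈ Finset.Icc 1 k, f.coeff (j : ℤ) * f.coeff (2 * (k : ℤ) + 1 - (j : ℤ)))
        + f.coeff (2 * (k : ℤ) + 2) := by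
  obtain ⟨F, G, hF1, hrep⟩ := hf.exists_repEq
  have h := hrep 2 one_le_two _ hnorm.isFaber_two (2 * k + 1)
  rw [repLHS_two_of_odd F G (odd_two_mul_add_one _), hF1,
    hnorm.coeff_aeval_faber_two_of_pos (by omega), add_sub_cancel_right,
    sum_Icc_mul_reflect] at h
  have hsum := sum_Icc_natCast (fun i : ℤ => f.coeff i * f.coeff (2 * k + 1 - i)) 1 k
  rw [Nat.cast_one] at hsum
  rw [show 4 * (k : ℤ) + 2 = 2 * (2 * k + 1) by ring,
    show 2 * (k : ℤ) + 2 = 2 * k + 1 + 1 by ring, ← hsum]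
  linarith

/-- If `f = q⁻¹ + Σ a_k q^k` is completely `(2+)`-replicable then
`a_{4k+2} = Σ_{j=1}^{k} a_j·a_{2k+1-j} + a_{2k+2}` for all `k ≥ 1`. -/
theorem coeff_four_k_add_two (f : Ser) (hnorm : IsNormalized f)
    (hf : Completely2PlusReplicable f) (k : ℕ) (hk : 1 ≤ k) :
    f.coeff (4 * (k : ℤ) + 2)
      = (∑ j ∈ Finset.Icc 1 k, f.coeff (j : ℤ) * f.coeff (2 * (k : ℤ) + 1 - (j : ℤ)))
        + f.coeff (2 * (k : ℤ) + 2) :=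
  coeff_four_k_add_two_general f hnorm hf k
end
end

section
/- Let f(q) = q^{-1} + Σ_{k≥1} a_k q^k be completely (2+)-replicable. Then f is replicable in the classical sense, with replicates f^{(n)}(z) = f^{[n]}(z) for n odd, and f^{(n)}(z) = f^{[n]}(z) + f^{[n/√2]}(z/2) + f^{[n/√2]}((z+1)/2) for n even; i.e., these functions satisfy Σ_{ad=n, 0≤b<d} f^{(a)}((aτ+b)/d) = P_{n,f}(f(τ)) for all n ≥ 1. -/
noncomputable section

/-- A completely `(2+)`-replicable `f` is replicable in the classical sense, with
classical replicates `f^{(a)} = f^{[a]}` for `a` odd and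
`f^{(a)}(z) = f^{[a]}(z) + f^{[a/√2]}(z/2) + f^{[a/√2]}((z+1)/2)` for `a` even;
i.e. `Σ_{ad=n, 0≤b<d} f^{(a)}((aτ+b)/d) = P_{n,f}(f(τ))` for all `n ≥ 1`.
On `q`-expansions, `f^{(a)}` has coefficients
`c^{(a)}_j = a_j^{[a]} + (a even) 2·a_{2j}^{[a√2/2]}`, and the coefficient of `q^k` of
the left side is `Σ_{ad=n, a ∣ k} d·c^{(a)}_{dk/a}`. -/
theorem completely_rep_implies_replicable (Φ : ℕ × Bool → Ser) (f : Ser)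
    (hΦ : Φ (1, false) = f) (hnorm : ∀ r : ℕ × Bool, 1 ≤ r.1 → IsNormalized (Φ r))
    (hsys : IsCR2System Φ) :
    ∀ n : ℕ, 1 ≤ n → ∀ P : Polynomial ℚ, IsFaber f n P → ∀ k : ℤ,
      (∑ x ∈ n.divisorsAntidiagonal,
        if (x.1 : ℤ) ∣ k then
          (x.2 : ℚ) * ((Φ (x.1, false)).coeff ((x.2 : ℤ) * k / (x.1 : ℤ))
            + (if Even x.1 then
                2 * (Φ (x.1 / 2, true)).coeff (2 * ((x.2 : ℤ) * k / (x.1 : ℤ)))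
              else 0))
        else 0)
      = (Polynomial.aeval f P).coeff k := by
  intro n hn P hP k
  rw [← hΦ] at hP
  have h := hsys (1, false) (le_refl 1) n hn P hP k
  rw [hΦ] at h
  rw [← h]
  unfold RepLHS
  have e1 : ∀ a : ℕ, indexMul (1, false) (a, false) = (a, false) := by
    intro a; simp [indexMul]
  have e2 : ∀ a : ℕ, indexMul (1, false) (a, true) = (a, true) := by
    intro a; simp [indexMul]
  simp only [e1, e2]
  have hsplit :
      (∑ x ∈ n.divisorsAntidiagonal,
        if (x.1 : ℤ) ∣ k then
          (x.2 : ℚ) * ((Φ (x.1, false)).coeff ((x.2 : ℤ) * k / (x.1 : ℤ))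
            + (if Even x.1 then
                2 * (Φ (x.1 / 2, true)).coeff (2 * ((x.2 : ℤ) * k / (x.1 : ℤ)))
              else 0))
        else 0)
      = (∑ x ∈ n.divisorsAntidiagonal,
          if (x.1 : ℤ) ∣ k then
            (x.2 : ℚ) * (Φ (x.1, false)).coeff ((x.2 : ℤ) * k / (x.1 : ℤ)) else 0)
        + (∑ x ∈ n.divisorsAntidiagonal,
          if Even x.1 ∧ (x.1 : ℤ) ∣ k then
            (x.2 : ℚ) * (2 * (Φ (x.1 / 2, true)).coeff (2 * ((x.2 : ℤ) * k / (x.1 : ℤ))))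
          else 0) := by
    rw [← Finset.sum_add_distrib]
    refine Finset.sum_congr rfl fun x hx => ?_
    by_cases h1 : (x.1 : ℤ) ∣ k <;> by_cases h2 : Even x.1 <;>
      simp [h1, h2] <;> ring
  rw [hsplit]
  congr 1
  rw [show (∑ x ∈ n.divisorsAntidiagonal,
      if Even x.1 ∧ (x.1 : ℤ) ∣ k then
        (x.2 : ℚ) * (2 * (Φ (x.1 / 2, true)).coeff (2 * ((x.2 : ℤ) * k / (x.1 : ℤ))))
      else 0)
    = ∑ x ∈ n.divisorsAntidiagonal.filter (fun x => Even x.1),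
      if (x.1 : ℤ) ∣ k then
        (x.2 : ℚ) * (2 * (Φ (x.1 / 2, true)).coeff (2 * ((x.2 : ℤ) * k / (x.1 : ℤ))))
      else 0 from ?_,
    show (∑ x ∈ n.divisorsAntidiagonal,
      if Even x.2 ∧ (2 * (x.1 : ℤ)) ∣ k then
        (x.2 : ℚ) * (Φ (x.1, true)).coeff ((x.2 : ℤ) * k / (2 * (x.1 : ℤ)))
      else 0)
    = ∑ x ∈ n.divisorsAntidiagonal.filter (fun x => Even x.2),
      if (2 * (x.1 : ℤ)) ∣ k then
        (x.2 : ℚ) * (Φ (x.1, true)).coeff ((x.2 : ℤ) * k / (2 * (x.1 : ℤ)))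
      else 0 from ?_]
  · refine Finset.sum_nbij' (fun x => (x.1 / 2, 2 * x.2)) (fun x => (2 * x.1, x.2 / 2))
      ?_ ?_ ?_ ?_ ?_
    · intro x hx
      simp only [Finset.mem_filter, Nat.mem_divisorsAntidiagonal] at hx ⊢
      obtain ⟨⟨hmul, hne⟩, ⟨c, hc⟩⟩ := hx
      refine ⟨⟨?_, hne⟩, ⟨x.2, by ring⟩⟩
      have h1 : x.1 / 2 = c := by omega
      rw [h1, ← hmul, hc]; ring
    · intro x hx
      simp only [Finset.mem_filter, Nat.mem_divisorsAntidiagonal] at hx ⊢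
      obtain ⟨⟨hmul, hne⟩, ⟨c, hc⟩⟩ := hx
      refine ⟨⟨?_, hne⟩, ⟨x.1, by ring⟩⟩
      have h1 : x.2 / 2 = c := by omega
      rw [h1, ← hmul, hc]; ring
    · intro x hx
      simp only [Finset.mem_filter, Nat.mem_divisorsAntidiagonal] at hx
      obtain ⟨⟨hmul, hne⟩, ⟨c, hc⟩⟩ := hx
      obtain ⟨x1, x2⟩ := x
      simp only [Prod.mk.injEq]
      constructor <;> omega
    · intro x hx
      simp only [Finset.mem_filter, Nat.mem_divisorsAntidiagonal] at hx
      obtain ⟨⟨hmul, hne⟩, ⟨c, hc⟩⟩ := hx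
      obtain ⟨x1, x2⟩ := x
      simp only [Prod.mk.injEq]
      constructor <;> omega
    · intro x hx
      simp only [Finset.mem_filter, Nat.mem_divisorsAntidiagonal] at hx
      obtain ⟨⟨hmul, hne⟩, ⟨c, hc⟩⟩ := hx
      have ha : x.1 = 2 * (x.1 / 2) := by omega
      have ha' : ((x.1 : ℤ)) = 2 * ((x.1 / 2 : ℕ) : ℤ) := by push_cast [ha.symm]; omega
      have hne' : ((x.1 / 2 : ℕ) : ℤ) ≠ 0 := by
        have : x.1 ≠ 0 := by rintro h0; apply hne; rw [← hmul, h0]; ring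
        simp; omega
      by_cases hd : (x.1 : ℤ) ∣ k
      · have hd2 : (2 * ((x.1 / 2 : ℕ) : ℤ)) ∣ k := by rwa [← ha']
        rw [if_pos hd, if_pos hd2]
        obtain ⟨m, hm⟩ := hd2
        subst hm
        rw [ha']
        rw [show ((x.2 : ℤ)) * (2 * ((x.1/2 : ℕ) : ℤ) * m) = (2 * ((x.1/2:ℕ):ℤ)) * ((x.2:ℤ) * m) by ring,
          Int.mul_ediv_cancel_left _ (by omega),
          show (((2 * x.2 : ℕ) : ℤ)) * (2 * ((x.1/2 : ℕ) : ℤ) * m) = (2 * ((x.1/2:ℕ):ℤ)) * (((2*x.2:ℕ):ℤ) * m) by push_cast; ring,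
          Int.mul_ediv_cancel_left _ (by omega)]
        push_cast
        ring_nf
      · have hd2 : ¬ (2 * ((x.1 / 2 : ℕ) : ℤ)) ∣ k := by rwa [← ha']
        rw [if_neg hd, if_neg hd2]
  · rw [Finset.sum_filter]
    exact Finset.sum_congr rfl fun x hx => ite_and _ _ _ _
  · rw [Finset.sum_filter]
    exact Finset.sum_congr rfl fun x hx => ite_and _ _ _ _
end
end

section
/- Let m = 2^α·β be a positive integer with β odd. Then the total Hecke sum operator T̃_m for Γ₀(2)⁺ decomposes as T̃_m = Σ_{r² | m, r odd} Σ_{i=0}^{α} T_{m/(r²·2^i)}, where T_n denotes the single double-coset operator and T̃_m the sum of all double cosets of determinant m. -/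
noncomputable section

/-- The total Hecke sum operator `T̃_m` for `Γ₀(2)⁺` acting on weight-0 functions:
`T̃_m f(τ) = Σ_{xz=m, 0≤y<z} f((xτ+y)/z)` for `m` odd, with the additional sum
`Σ_{xz=2m, x,z even, 0≤y<z} f((xτ+y)/z)` when `m` is even. -/
def TtildeOp (m : ℕ) (f : ℂ → ℂ) (τ : ℂ) : ℂ :=
  (∑ x ∈ m.divisorsAntidiagonal, ∑ y ∈ Finset.range x.2,
    f (((x.1 : ℂ) * τ + (y : ℂ)) / (x.2 : ℂ)))
  + (if Even m then
      ∑ x ∈ (2 * m).divisorsAntidiagonal.filter (fun x => Even x.1 ∧ Even x.2),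
        ∑ y ∈ Finset.range x.2, f (((x.1 : ℂ) * τ + (y : ℂ)) / (x.2 : ℂ))
    else 0)

/-- The single double-coset operator `T_m` for `Γ₀(2)⁺`:
`T_m f(τ) = Σ_{γ ∈ M^m} f(γτ)` where `M^m` consists of `[[x,y],[0,z]]` with `xz = m`,
`0 ≤ y < z`, `gcd(x,y,z) = 1`, `x` odd, together with (for `m` even) those with
`xz = m`, `z` odd, and `2^{-1/2}·[[x,y],[0,z]]` with `xz = 2m`, `x, z` even
(the scalar `2^{-1/2}` acts trivially in weight 0). -/
def TplusOp (m : ℕ) (f : ℂ → ℂ) (τ : ℂ) : ℂ :=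
  (∑ x ∈ m.divisorsAntidiagonal.filter (fun x => Odd x.1),
    ∑ y ∈ (Finset.range x.2).filter (fun y => Nat.gcd (Nat.gcd x.1 y) x.2 = 1),
      f (((x.1 : ℂ) * τ + (y : ℂ)) / (x.2 : ℂ)))
  + (if Even m then
      (∑ x ∈ m.divisorsAntidiagonal.filter (fun x => Odd x.2),
        ∑ y ∈ (Finset.range x.2).filter (fun y => Nat.gcd (Nat.gcd x.1 y) x.2 = 1),
          f (((x.1 : ℂ) * τ + (y : ℂ)) / (x.2 : ℂ)))
      + (∑ x ∈ (2 * m).divisorsAntidiagonal.filter (fun x => Even x.1 ∧ Even x.2),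
        ∑ y ∈ (Finset.range x.2).filter (fun y => Nat.gcd (Nat.gcd x.1 y) x.2 = 1),
          f (((x.1 : ℂ) * τ + (y : ℂ)) / (x.2 : ℂ)))
    else 0)

namespace HeckeAux

variable (f : ℂ → ℂ) (τ : ℂ)

/-- Generic primitive-triple sum with a parity-style predicate on the divisor pair. -/
def Pf (p : ℕ × ℕ → Prop) [DecidablePred p] (n : ℕ) : ℂ :=
  ∑ x ∈ n.divisorsAntidiagonal.filter p,
    ∑ y ∈ (Finset.range x.2).filter (fun y => Nat.gcd (Nat.gcd x.1 y) x.2 = 1),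
      f (((x.1 : ℂ) * τ + (y : ℂ)) / (x.2 : ℂ))

def Sf (n : ℕ) : ℂ := Pf f τ (fun _ => True) n
def Af (n : ℕ) : ℂ := Pf f τ (fun x => Odd x.1) n
def Bf (n : ℕ) : ℂ := Pf f τ (fun x => Odd x.2) n
def Cf (n : ℕ) : ℂ := Pf f τ (fun x => Even x.1 ∧ Even x.2) n

lemma key_scale (g x y z : ℕ) (hg : 0 < g) :
    ((↑(g * x) : ℂ) * τ + ↑(g * y)) / ↑(g * z) = ((x : ℂ) * τ + y) / z := by
  push_cast
  rw [show ((g : ℂ) * x * τ + g * y) = g * (x * τ + y) by ring,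
    mul_div_mul_left _ _ (by exact_mod_cast hg.ne')]

/-- Stratification by the gcd of the triple. -/
lemma strat (p : ℕ × ℕ → Prop) [DecidablePred p] (n : ℕ) :
    ∑ x ∈ n.divisorsAntidiagonal.filter p, ∑ y ∈ Finset.range x.2,
      f (((x.1 : ℂ) * τ + (y : ℂ)) / (x.2 : ℂ))
    = ∑ d ∈ n.divisors.filter (fun d => d ^ 2 ∣ n),
        Pf f τ (fun x => p (d * x.1, d * x.2)) (n / d ^ 2) := by
  classical
  have hR : ∀ d : ℕ, Pf f τ (fun x => p (d * x.1, d * x.2)) (n / d ^ 2)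
      = ∑ q ∈ ((n / d ^ 2).divisorsAntidiagonal.filter (fun x => p (d * x.1, d * x.2))).sigma
          (fun x => (Finset.range x.2).filter (fun y => Nat.gcd (Nat.gcd x.1 y) x.2 = 1)),
          f (((q.1.1 : ℂ) * τ + (q.2 : ℂ)) / (q.1.2 : ℂ)) := by
    intro d
    exact Finset.sum_sigma' _ _ _
  rw [Finset.sum_sigma']
  simp only [hR]
  rw [Finset.sum_sigma']
  refine Finset.sum_nbij'
    (fun a => ⟨Nat.gcd (Nat.gcd a.1.1 a.2) a.1.2,
      ⟨(a.1.1 / Nat.gcd (Nat.gcd a.1.1 a.2) a.1.2, a.1.2 / Nat.gcd (Nat.gcd a.1.1 a.2) a.1.2),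
        a.2 / Nat.gcd (Nat.gcd a.1.1 a.2) a.1.2⟩⟩)
    (fun b => ⟨(b.1 * b.2.1.1, b.1 * b.2.1.2), b.1 * b.2.2⟩)
    ?_ ?_ ?_ ?_ ?_
  · rintro ⟨⟨x, z⟩, y⟩ ha
    simp only [Finset.mem_sigma, Finset.mem_filter, Nat.mem_divisorsAntidiagonal,
      Finset.mem_range, Nat.mem_divisors] at ha ⊢
    obtain ⟨⟨⟨hxz, hn0⟩, hp⟩, hy⟩ := ha
    set g := Nat.gcd (Nat.gcd x y) z with hgdef
    have hz0 : 0 < z := by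
      rcases Nat.eq_zero_or_pos z with h | h
      · exfalso; apply hn0; rw [← hxz, h, mul_zero]
      · exact h
    have hg0 : 0 < g := Nat.pos_of_ne_zero (fun h => by
      have := Nat.eq_zero_of_gcd_eq_zero_right h; omega)
    have hgx : g ∣ x := (Nat.gcd_dvd_left _ _).trans (Nat.gcd_dvd_left _ _) |>.trans dvd_rfl
    have hgy : g ∣ y := (Nat.gcd_dvd_left _ _).trans (Nat.gcd_dvd_right _ _)
    have hgz : g ∣ z := Nat.gcd_dvd_right _ _
    have hg2 : g ^ 2 ∣ n := by
      rw [← hxz, sq]; exact mul_dvd_mul hgx hgz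
    have hquot : (x / g) * (z / g) = n / g ^ 2 := by
      rw [Nat.div_mul_div_comm hgx hgz, hxz, sq]
    refine ⟨⟨⟨hgx.trans ⟨z, hxz.symm⟩, hn0⟩, hg2⟩, ⟨⟨hquot, ?_⟩, ?_⟩, ?_, ?_⟩
    · exact (Nat.div_pos (Nat.le_of_dvd (Nat.pos_of_ne_zero hn0) hg2) (pow_pos hg0 2)).ne'
    · rw [Nat.mul_div_cancel' hgx, Nat.mul_div_cancel' hgz]; exact hp
    · exact Nat.div_lt_div_of_lt_of_dvd hgz hy
    · rw [Nat.gcd_div hgx hgy, Nat.gcd_div (Nat.dvd_gcd hgx hgy) hgz, ← hgdef, Nat.div_self hg0]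
  · rintro ⟨d, ⟨x, z⟩, y⟩ hb
    simp only [Finset.mem_sigma, Finset.mem_filter, Nat.mem_divisorsAntidiagonal,
      Finset.mem_range, Nat.mem_divisors] at hb ⊢
    obtain ⟨⟨⟨hdn, hn0⟩, hd2⟩, ⟨⟨hxz, hq0⟩, hp⟩, hy, hg⟩ := hb
    have hd0 : 0 < d := Nat.pos_of_dvd_of_pos hdn (Nat.pos_of_ne_zero hn0)
    have heq : d * x * (d * z) = n := by
      calc d * x * (d * z) = d ^ 2 * (x * z) := by ring
        _ = n := by rw [hxz, Nat.mul_div_cancel' hd2]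
    have hlt : d * y < d * z := by
      exact Nat.mul_lt_mul_of_le_of_lt (le_refl d) hy hd0
    first
    | exact ⟨⟨⟨heq, hn0⟩, hp⟩, hlt⟩
    | exact ⟨⟨heq, hn0, hp⟩, hlt⟩
    | exact ⟨heq, hn0, hp, hlt⟩
  · rintro ⟨⟨x, z⟩, y⟩ ha
    simp only [Finset.mem_sigma, Finset.mem_filter, Nat.mem_divisorsAntidiagonal,
      Finset.mem_range] at ha
    obtain ⟨⟨⟨hxz, hn0⟩, hp⟩, hy⟩ := ha
    have hgx : Nat.gcd (Nat.gcd x y) z ∣ x := (Nat.gcd_dvd_left _ _).trans (Nat.gcd_dvd_left _ _)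
    have hgy : Nat.gcd (Nat.gcd x y) z ∣ y := (Nat.gcd_dvd_left _ _).trans (Nat.gcd_dvd_right _ _)
    have hgz : Nat.gcd (Nat.gcd x y) z ∣ z := Nat.gcd_dvd_right _ _
    simp only [Nat.mul_div_cancel' hgx, Nat.mul_div_cancel' hgy, Nat.mul_div_cancel' hgz]
  · rintro ⟨d, ⟨x, z⟩, y⟩ hb
    simp only [Finset.mem_sigma, Finset.mem_filter, Nat.mem_divisorsAntidiagonal,
      Finset.mem_range, Nat.mem_divisors] at hb
    obtain ⟨⟨⟨hdn, hn0⟩, hd2⟩, ⟨⟨hxz, hq0⟩, hp⟩, hy, hg⟩ := hb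
    have hd0 : 0 < d := Nat.pos_of_dvd_of_pos hdn (Nat.pos_of_ne_zero hn0)
    have hgd : Nat.gcd (Nat.gcd (d * x) (d * y)) (d * z) = d := by
      rw [Nat.gcd_mul_left, Nat.gcd_mul_left, hg, mul_one]
    simp only [hgd, Nat.mul_div_cancel_left _ hd0]
  · rintro ⟨⟨x, z⟩, y⟩ ha
    simp only [Finset.mem_sigma, Finset.mem_filter, Nat.mem_divisorsAntidiagonal,
      Finset.mem_range] at ha
    obtain ⟨⟨⟨hxz, hn0⟩, hp⟩, hy⟩ := ha
    set g := Nat.gcd (Nat.gcd x y) z with hgdef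
    have hz0 : 0 < z := by
      rcases Nat.eq_zero_or_pos z with h | h
      · exfalso; apply hn0; rw [← hxz, h, mul_zero]
      · exact h
    have hg0 : 0 < g := Nat.pos_of_ne_zero (fun h => by
      have := Nat.eq_zero_of_gcd_eq_zero_right h; omega)
    have hgx : g ∣ x := (Nat.gcd_dvd_left _ _).trans (Nat.gcd_dvd_left _ _)
    have hgy : g ∣ y := (Nat.gcd_dvd_left _ _).trans (Nat.gcd_dvd_right _ _)
    have hgz : g ∣ z := Nat.gcd_dvd_right _ _
    dsimp only
    conv_lhs => rw [← Nat.mul_div_cancel' hgx, ← Nat.mul_div_cancel' hgy,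
      ← Nat.mul_div_cancel' hgz]
    exact congrArg f (key_scale τ g _ _ _ hg0)


lemma S_eq_A_of_odd {n : ℕ} (hn : Odd n) : Sf f τ n = Af f τ n := by
  unfold Sf Af Pf
  refine Finset.sum_congr ?_ (fun _ _ => rfl)
  rw [Finset.filter_true]
  symm
  refine Finset.filter_true_of_mem ?_
  rintro ⟨x, z⟩ hx
  rw [Nat.mem_divisorsAntidiagonal] at hx
  have : Odd (x * z) := hx.1 ▸ hn
  exact (Nat.odd_mul.mp this).1

lemma S_eq_of_even {n : ℕ} (hn : Even n) :
    Sf f τ n = Af f τ n + Bf f τ n + Cf f τ n := by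
  classical
  unfold Sf Af Bf Cf Pf
  rw [Finset.filter_true, add_assoc]
  rw [← Finset.sum_filter_add_sum_filter_not n.divisorsAntidiagonal (fun x => Odd x.1)]
  congr 1
  rw [← Finset.sum_filter_add_sum_filter_not
    (n.divisorsAntidiagonal.filter (fun x => ¬ Odd x.1)) (fun x => Odd x.2)]
  congr 1
  · refine Finset.sum_congr ?_ (fun _ _ => rfl)
    rw [Finset.filter_filter]
    refine Finset.filter_congr ?_
    rintro ⟨x, z⟩ hx
    rw [Nat.mem_divisorsAntidiagonal] at hx
    constructor
    · exact fun h => h.2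
    · intro h
      refine ⟨?_, h⟩
      have hev : Even (x * z) := hx.1.symm ▸ hn
      rcases Nat.even_mul.mp hev with h1 | h2
      · exact Nat.not_odd_iff_even.mpr h1
      · exact absurd h (Nat.not_odd_iff_even.mpr h2)
  · refine Finset.sum_congr ?_ (fun _ _ => rfl)
    rw [Finset.filter_filter]
    refine Finset.filter_congr ?_
    rintro ⟨x, z⟩ hx
    rw [Nat.not_odd_iff_even, Nat.not_odd_iff_even]

lemma C_eq_zero {n : ℕ} (hn : ¬ (4 ∣ n)) : Cf f τ n = 0 := by
  unfold Cf Pf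
  refine Finset.sum_eq_zero ?_
  rintro ⟨x, z⟩ hx
  rw [Finset.mem_filter, Nat.mem_divisorsAntidiagonal] at hx
  exfalso
  obtain ⟨⟨hxz, hn0⟩, ⟨a, ha⟩, b, hb⟩ := hx
  exact hn ⟨a * b, by rw [← hxz, ha, hb]; ring⟩

lemma Tplus_eq (n : ℕ) :
    TplusOp n f τ = Af f τ n + (if Even n then Bf f τ n + Cf f τ (2 * n) else 0) := rfl


lemma sumT (b : ℕ) (hb : Odd b) (α : ℕ) :
    ∑ i ∈ Finset.range (α + 1), TplusOp (2 ^ i * b) f τ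
      = (∑ i ∈ Finset.range (α + 1), Sf f τ (2 ^ i * b)) + Cf f τ (2 ^ (α + 1) * b) := by
  induction α with
  | zero =>
    simp only [zero_add, Finset.sum_range_one, pow_zero, one_mul, pow_one]
    rw [Tplus_eq, if_neg (by simpa [Nat.not_even_iff_odd] using hb),
      S_eq_A_of_odd f τ hb, C_eq_zero]
    rintro ⟨c, hc⟩
    exact (Nat.not_even_iff_odd.mpr hb) ⟨c, by omega⟩
  | succ α ih =>
    rw [Finset.sum_range_succ, ih, Finset.sum_range_succ _ (α + 1), Tplus_eq,
      if_pos ⟨2 ^ α * b, by ring⟩]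
    have hS : Sf f τ (2 ^ (α + 1) * b)
        = Af f τ (2 ^ (α + 1) * b) + Bf f τ (2 ^ (α + 1) * b) + Cf f τ (2 ^ (α + 1) * b) :=
      S_eq_of_even f τ ⟨2 ^ α * b, by ring⟩
    have h2 : 2 * (2 ^ (α + 1) * b) = 2 ^ (α + 1 + 1) * b := by ring
    rw [h2, hS]
    ring

lemma parity_sum (u : ℕ → ℂ) (α : ℕ) :
    (∑ k ∈ Finset.range (α / 2 + 1), u (α - 2 * k))
      + (∑ k ∈ Finset.range ((α + 1) / 2), u (α - 1 - 2 * k))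
    = ∑ j ∈ Finset.range (α + 1), u j := by
  induction α with
  | zero => norm_num
  | succ α ih =>
    have h1 : (α + 1 + 1) / 2 = α / 2 + 1 := by omega
    have h2 : ∑ k ∈ Finset.range ((α + 1) / 2 + 1), u (α + 1 - 2 * k)
        = (∑ k ∈ Finset.range ((α + 1) / 2), u (α - 1 - 2 * k)) + u (α + 1) := by
      rw [Finset.sum_range_succ' (fun k => u (α + 1 - 2 * k)) ((α + 1) / 2)]
      congr 1
      exact Finset.sum_congr rfl (fun k _ => by rw [show α + 1 - 2 * (k + 1) = α - 1 - 2 * k from by omega])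
    rw [h2, h1]
    have h3 : ∑ k ∈ Finset.range (α / 2 + 1), u (α + 1 - 1 - 2 * k)
        = ∑ k ∈ Finset.range (α / 2 + 1), u (α - 2 * k) :=
      Finset.sum_congr rfl (fun k _ => by rw [show α + 1 - 1 - 2 * k = α - 2 * k from by omega])
    rw [h3, Finset.sum_range_succ _ (α + 1)]
    rw [← ih]
    ring

lemma rset_eq (m α β : ℕ) (hm : 0 < m) (hβ : Odd β) (hfact : m = 2 ^ α * β) :
    m.divisors.filter (fun r => Odd r ∧ r ^ 2 ∣ m)
      = β.divisors.filter (fun r => r ^ 2 ∣ β) := by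
  have hβ0 : 0 < β := hβ.pos
  ext r
  simp only [Finset.mem_filter, Nat.mem_divisors]
  constructor
  · rintro ⟨⟨hrm, hm0⟩, hodd, hr2⟩
    have hcop : Nat.Coprime r (2 ^ α) :=
      Nat.Coprime.pow_right _ hodd.coprime_two_right
    have hcop2 : Nat.Coprime (r ^ 2) (2 ^ α) := Nat.Coprime.pow_left _ hcop
    refine ⟨⟨hcop.dvd_of_dvd_mul_left (hfact ▸ hrm), hβ0.ne'⟩,
      hcop2.dvd_of_dvd_mul_left (hfact ▸ hr2)⟩
  · rintro ⟨⟨hrβ, hβ0'⟩, hr2⟩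
    have hodd : Odd r := by
      obtain ⟨c, hc⟩ := hrβ
      exact (Nat.odd_mul.mp (hc ▸ hβ)).1
    exact ⟨⟨hrβ.trans ⟨2 ^ α, by rw [hfact]; ring⟩, hm.ne'⟩, hodd,
      hr2.trans ⟨2 ^ α, by rw [hfact]; ring⟩⟩

lemma div_arith (γ k r β : ℕ) (h2k : 2 * k ≤ γ) (hr2 : r ^ 2 ∣ β) :
    (2 ^ γ * β) / (2 ^ k * r) ^ 2 = 2 ^ (γ - 2 * k) * (β / r ^ 2) := by
  have h1 : (2 ^ k * r) ^ 2 = 2 ^ (2 * k) * r ^ 2 := by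
    rw [mul_pow, ← pow_mul, mul_comm k 2]
  rw [h1, ← Nat.div_mul_div_comm (pow_dvd_pow 2 h2k) hr2, Nat.pow_div h2k (by norm_num)]


lemma reindexD (γ β : ℕ) (hβ : Odd β) (g : ℕ → ℂ) :
    ∑ d ∈ (2 ^ γ * β).divisors.filter (fun d => d ^ 2 ∣ 2 ^ γ * β), g d
      = ∑ r ∈ β.divisors.filter (fun r => r ^ 2 ∣ β),
          ∑ k ∈ Finset.range (γ / 2 + 1), g (2 ^ k * r) := by
  classical
  have hβ0 : 0 < β := hβ.pos
  have hN0 : (2 : ℕ) ^ γ * β ≠ 0 := by positivity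
  rw [← Finset.sum_product']
  refine Finset.sum_nbij'
    (fun d => (d / 2 ^ d.factorization 2, d.factorization 2))
    (fun p => 2 ^ p.2 * p.1) ?_ ?_ ?_ ?_ ?_
  · intro d hd
    simp only [Finset.mem_filter, Nat.mem_divisors, Finset.mem_product,
      Finset.mem_range] at hd ⊢
    obtain ⟨⟨hdN, _⟩, hd2⟩ := hd
    have hd0 : d ≠ 0 := by
      rintro rfl
      exact hN0 (Nat.eq_zero_of_zero_dvd hdN)
    set k := d.factorization 2 with hk
    set r := d / 2 ^ k with hr
    have hrd : r ∣ d := Nat.ordCompl_dvd d 2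
    have hrodd : Odd r := Nat.odd_iff.mpr
      (Nat.two_dvd_ne_zero.mp (Nat.not_dvd_ordCompl Nat.prime_two hd0))
    have hrβ : r ∣ β :=
      ((hrodd.coprime_two_right).pow_right γ).dvd_of_dvd_mul_left (hrd.trans hdN)
    have hr2β : r ^ 2 ∣ β := by
      refine (((hrodd.coprime_two_right).pow_right γ).pow_left 2).dvd_of_dvd_mul_left ?_
      exact (pow_dvd_pow_of_dvd hrd 2).trans hd2
    have h2k : 2 ^ (2 * k) ∣ 2 ^ γ := by
      have hcop : Nat.Coprime (2 ^ (2 * k)) β :=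
        Nat.Coprime.pow_left _ (hβ.coprime_two_right.symm)
      refine hcop.dvd_of_dvd_mul_right ?_
      have : 2 ^ (2 * k) ∣ d ^ 2 := by
        rw [mul_comm 2 k, pow_mul]
        exact pow_dvd_pow_of_dvd (Nat.ordProj_dvd d 2) 2
      exact this.trans hd2
    have hkγ : 2 * k ≤ γ := (Nat.pow_dvd_pow_iff_le_right (by norm_num)).mp h2k
    exact ⟨⟨⟨hrβ, hβ0.ne'⟩, hr2β⟩, by omega⟩
  · rintro ⟨r, k⟩ hp
    simp only [Finset.mem_filter, Nat.mem_divisors, Finset.mem_product,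
      Finset.mem_range] at hp ⊢
    obtain ⟨⟨⟨hrβ, _⟩, hr2β⟩, hk⟩ := hp
    have hkγ : 2 * k ≤ γ := by omega
    constructor
    · exact ⟨mul_dvd_mul (pow_dvd_pow 2 (by omega)) hrβ, hN0⟩
    · rw [mul_pow, ← pow_mul, mul_comm k 2]
      exact mul_dvd_mul (pow_dvd_pow 2 hkγ) hr2β
  · intro d hd
    exact Nat.ordProj_mul_ordCompl_eq_self d 2
  · rintro ⟨r, k⟩ hp
    simp only [Finset.mem_filter, Nat.mem_divisors, Finset.mem_product,
      Finset.mem_range] at hp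
    obtain ⟨⟨⟨hrβ, _⟩, hr2β⟩, hk⟩ := hp
    have hr0 : r ≠ 0 := by
      rintro rfl
      exact hβ0.ne' (Nat.eq_zero_of_zero_dvd hrβ)
    have hrodd : Odd r := by
      obtain ⟨c, hc⟩ := hrβ
      exact (Nat.odd_mul.mp (hc ▸ hβ)).1
    have hfac : (2 ^ k * r).factorization 2 = k := by
      rw [Nat.factorization_mul (by positivity) hr0]
      have h0 : r.factorization 2 = 0 :=
        Nat.factorization_eq_zero_of_not_dvd (Nat.two_dvd_ne_zero.mpr (Nat.odd_iff.mp hrodd))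
      simp [Nat.Prime.factorization_pow Nat.prime_two, h0]
    rw [Prod.mk.injEq]
    constructor
    · rw [hfac, Nat.mul_div_cancel_left r (by positivity)]
    · exact hfac
  · intro d hd
    exact congrArg g (Nat.ordProj_mul_ordCompl_eq_self d 2).symm


lemma Pf_evenpred (d n : ℕ) :
    Pf f τ (fun x => Even (d * x.1) ∧ Even (d * x.2)) n
      = if Even d then Sf f τ n else Cf f τ n := by
  rcases Nat.even_or_odd d with hd | hd
  · rw [if_pos hd]
    unfold Sf Pf
    refine Finset.sum_congr ?_ (fun _ _ => rfl)
    rw [Finset.filter_true]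
    refine Finset.filter_true_of_mem ?_
    exact fun x _ => ⟨hd.mul_right _, hd.mul_right _⟩
  · rw [if_neg (Nat.not_even_iff_odd.mpr hd)]
    unfold Cf Pf
    refine Finset.sum_congr ?_ (fun _ _ => rfl)
    refine Finset.filter_congr ?_
    intro x _
    have h1 : Even (d * x.1) ↔ Even x.1 := by
      rw [Nat.even_mul]
      simp [Nat.not_even_iff_odd.mpr hd]
    have h2 : Even (d * x.2) ↔ Even x.2 := by
      rw [Nat.even_mul]
      simp [Nat.not_even_iff_odd.mpr hd]
    rw [h1, h2]

lemma div_arith2 (γ i r β : ℕ) (hi : i ≤ γ) (hr2 : r ^ 2 ∣ β) :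
    (2 ^ γ * β) / (2 ^ i * r ^ 2) = 2 ^ (γ - i) * (β / r ^ 2) := by
  rw [← Nat.div_mul_div_comm (pow_dvd_pow 2 hi) hr2, Nat.pow_div hi (by norm_num)]

end HeckeAux

open HeckeAux

/-- For `m = 2^α·β` with `β` odd:
`T̃_m = Σ_{r² ∣ m, r odd} Σ_{i=0}^{α} T_{m/(r²·2^i)}`. -/
theorem Ttilde_eq_sum_T (m α β : ℕ) (hm : 0 < m) (hβ : Odd β) (hfact : m = 2 ^ α * β)
    (f : ℂ → ℂ) (τ : ℂ) :
    TtildeOp m f τ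
      = ∑ r ∈ m.divisors.filter (fun r => Odd r ∧ r ^ 2 ∣ m),
          ∑ i ∈ Finset.range (α + 1), TplusOp (m / (r ^ 2 * 2 ^ i)) f τ := by
  classical
  subst hfact
  have hβ0 : 0 < β := hβ.pos
  set R := β.divisors.filter (fun r => r ^ 2 ∣ β) with hR
  -- odd quotient
  have hbodd : ∀ r, r ^ 2 ∣ β → Odd (β / r ^ 2) := by
    intro r hr2
    obtain ⟨c, hc⟩ := Nat.div_dvd_of_dvd hr2
    exact (Nat.odd_mul.mp (hc ▸ hβ)).1
  -- RHS
  have hRHS : ∑ r ∈ (2 ^ α * β).divisors.filter (fun r => Odd r ∧ r ^ 2 ∣ 2 ^ α * β),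
          ∑ i ∈ Finset.range (α + 1), TplusOp ((2 ^ α * β) / (r ^ 2 * 2 ^ i)) f τ
      = ∑ r ∈ R, ((∑ j ∈ Finset.range (α + 1), Sf f τ (2 ^ j * (β / r ^ 2)))
          + Cf f τ (2 ^ (α + 1) * (β / r ^ 2))) := by
    rw [rset_eq _ α β hm hβ rfl, ← hR]
    refine Finset.sum_congr rfl (fun r hr => ?_)
    rw [hR, Finset.mem_filter, Nat.mem_divisors] at hr
    obtain ⟨⟨hrβ, _⟩, hr2⟩ := hr
    have h1 : ∀ i ∈ Finset.range (α + 1),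
        TplusOp ((2 ^ α * β) / (r ^ 2 * 2 ^ i)) f τ
          = TplusOp (2 ^ (α - i) * (β / r ^ 2)) f τ := by
      intro i hi
      rw [Finset.mem_range] at hi
      rw [mul_comm (r ^ 2) (2 ^ i), div_arith2 α i r β (by omega) hr2]
    rw [Finset.sum_congr rfl h1]
    have h2 : ∑ i ∈ Finset.range (α + 1), TplusOp (2 ^ (α - i) * (β / r ^ 2)) f τ
        = ∑ j ∈ Finset.range (α + 1), TplusOp (2 ^ j * (β / r ^ 2)) f τ := by
      rw [← Finset.sum_range_reflect (fun j => TplusOp (2 ^ j * (β / r ^ 2)) f τ) (α + 1)]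
      exact Finset.sum_congr rfl (fun i _ => by rw [show α + 1 - 1 - i = α - i from by omega])
    rw [h2, sumT f τ _ (hbodd r hr2) α]
  rw [hRHS]
  -- LHS part 1
  have hL1 : (∑ x ∈ (2 ^ α * β).divisorsAntidiagonal, ∑ y ∈ Finset.range x.2,
        f (((x.1 : ℂ) * τ + (y : ℂ)) / (x.2 : ℂ)))
      = ∑ r ∈ R, ∑ k ∈ Finset.range (α / 2 + 1), Sf f τ (2 ^ (α - 2 * k) * (β / r ^ 2)) := by
    rw [← Finset.filter_true ((2 ^ α * β).divisorsAntidiagonal),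
      strat f τ (fun _ => True) (2 ^ α * β)]
    have hid : ∀ d ∈ (2 ^ α * β).divisors.filter (fun d => d ^ 2 ∣ 2 ^ α * β),
        Pf f τ (fun x => True) ((2 ^ α * β) / d ^ 2) = Sf f τ ((2 ^ α * β) / d ^ 2) :=
      fun d _ => rfl
    rw [Finset.sum_congr rfl hid, reindexD α β hβ (fun d => Sf f τ ((2 ^ α * β) / d ^ 2)), ← hR]
    refine Finset.sum_congr rfl (fun r hr => Finset.sum_congr rfl (fun k hk => ?_))
    rw [hR, Finset.mem_filter, Nat.mem_divisors] at hr
    rw [Finset.mem_range] at hk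
    rw [div_arith α k r β (by omega) hr.2]
  rcases Nat.eq_zero_or_pos α with hα0 | hα1
  · subst hα0
    unfold TtildeOp
    rw [if_neg (by simpa [Nat.not_even_iff_odd] using hβ), add_zero, hL1]
    refine Finset.sum_congr rfl (fun r hr => ?_)
    rw [hR, Finset.mem_filter, Nat.mem_divisors] at hr
    obtain ⟨⟨hrβ, _⟩, hr2⟩ := hr
    have h4 : ¬ (4 ∣ 2 ^ (0 + 1) * (β / r ^ 2)) := by
      rintro ⟨c, hc⟩
      have hb := Nat.odd_iff.mp (hbodd r hr2)
      norm_num at hc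
      omega
    rw [C_eq_zero f τ h4, add_zero]
    norm_num
  · obtain ⟨a, rfl⟩ : ∃ a, α = a + 1 := ⟨α - 1, by omega⟩
    have hev : Even (2 ^ (a + 1) * β) := ⟨2 ^ a * β, by ring⟩
    have h2m : 2 * (2 ^ (a + 1) * β) = 2 ^ (a + 1 + 1) * β := by ring
    have hL2 : (∑ x ∈ (2 * (2 ^ (a + 1) * β)).divisorsAntidiagonal.filter
          (fun x => Even x.1 ∧ Even x.2), ∑ y ∈ Finset.range x.2,
          f (((x.1 : ℂ) * τ + (y : ℂ)) / (x.2 : ℂ)))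
        = ∑ r ∈ R, ((∑ k ∈ Finset.range ((a + 1 + 1) / 2),
            Sf f τ (2 ^ (a + 1 - 1 - 2 * k) * (β / r ^ 2)))
            + Cf f τ (2 ^ (a + 1 + 1) * (β / r ^ 2))) := by
      rw [h2m, strat f τ (fun x => Even x.1 ∧ Even x.2) (2 ^ (a + 1 + 1) * β)]
      refine Eq.trans (Finset.sum_congr rfl (fun d _ => Pf_evenpred f τ d _)) ?_
      rw [reindexD (a + 1 + 1) β hβ (fun d => if Even d then
        Sf f τ ((2 ^ (a + 1 + 1) * β) / d ^ 2) else Cf f τ ((2 ^ (a + 1 + 1) * β) / d ^ 2)),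
        ← hR]
      refine Finset.sum_congr rfl (fun r hr => ?_)
      rw [hR, Finset.mem_filter, Nat.mem_divisors] at hr
      obtain ⟨⟨hrβ, _⟩, hr2⟩ := hr
      have hrodd : Odd r := by
        obtain ⟨c, hc⟩ := hrβ
        exact (Nat.odd_mul.mp (hc ▸ hβ)).1
      rw [show (a + 1 + 1) / 2 + 1 = ((a + 1 + 1) / 2) + 1 from rfl,
        Finset.sum_range_succ' (fun k => if Even (2 ^ k * r) then
          Sf f τ ((2 ^ (a + 1 + 1) * β) / (2 ^ k * r) ^ 2)
          else Cf f τ ((2 ^ (a + 1 + 1) * β) / (2 ^ k * r) ^ 2)) ((a + 1 + 1) / 2)]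
      congr 1
      · refine Finset.sum_congr rfl (fun k hk => ?_)
        rw [Finset.mem_range] at hk
        have hevk : Even (2 ^ (k + 1) * r) := ⟨2 ^ k * r, by ring⟩
        rw [if_pos hevk,
          div_arith (a + 1 + 1) (k + 1) r β (by omega) hr2,
          show a + 1 + 1 - 2 * (k + 1) = a + 1 - 1 - 2 * k from by omega]
      · have hne : ¬ Even (2 ^ 0 * r) := by
          rw [pow_zero, one_mul]; exact Nat.not_even_iff_odd.mpr hrodd
        rw [if_neg hne,
          div_arith (a + 1 + 1) 0 r β (by omega) hr2]
        norm_num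
    unfold TtildeOp
    rw [if_pos hev, hL1, hL2, ← Finset.sum_add_distrib]
    refine Finset.sum_congr rfl (fun r hr => ?_)
    have hps := parity_sum (fun j => Sf f τ (2 ^ j * (β / r ^ 2))) (a + 1)
    rw [← add_assoc]
    exact congrArg (fun X => X + Cf f τ (2 ^ (a + 1 + 1) * (β / r ^ 2))) hps
end
end

section
/- Define operators on functions: R_m f(τ) = Σ_{xz=m, 0≤y<z} f((xτ+y)/z), U_m f = same sum restricted to z odd, D_m f = same restricted to x odd, O_m f = same restricted to x,z even and y odd. Then for any m ≥ 1: O_{4m} = R_{4m} − R_m − U_{4m} − D_{4m}, and if m is odd then R_{2m} = U_{2m} + D_{2m}. -/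
/-!
For `n` even, `x z = n` forces `x` or `z` to be even, so the terms of `R_n` with `x` odd and those
with `z` odd are disjoint, and what remains has `x`, `z` both even. These split by the parity of
`y` into `O_n` and the terms with `x`, `y`, `z` all even, which are the terms of `R_{n/4}` after
halving `x`, `y`, `z` (the argument `(xτ + y)/z` is unchanged). When `4 ∤ n`, no pair with `x`, `z`
both even exists.
-/

noncomputable section

/-- `R_m f(τ) = Σ_{xz=m, 0≤y<z} f((xτ+y)/z)`. -/
def Rop (m : ℕ) (f : ℂ → ℂ) (τ : ℂ) : ℂ :=
  ∑ x ∈ m.divisorsAntidiagonal, ∑ y ∈ Finset.range x.2,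
    f (((x.1 : ℂ) * τ + (y : ℂ)) / (x.2 : ℂ))

/-- `U_m f(τ)`: the same sum restricted to `z` odd. -/
def Uop (m : ℕ) (f : ℂ → ℂ) (τ : ℂ) : ℂ :=
  ∑ x ∈ m.divisorsAntidiagonal.filter (fun x => Odd x.2), ∑ y ∈ Finset.range x.2,
    f (((x.1 : ℂ) * τ + (y : ℂ)) / (x.2 : ℂ))

/-- `D_m f(τ)`: the same sum restricted to `x` odd. -/
def Dop (m : ℕ) (f : ℂ → ℂ) (τ : ℂ) : ℂ :=
  ∑ x ∈ m.divisorsAntidiagonal.filter (fun x => Odd x.1), ∑ y ∈ Finset.range x.2,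
    f (((x.1 : ℂ) * τ + (y : ℂ)) / (x.2 : ℂ))

/-- `O_m f(τ)`: the same sum restricted to `x, z` even and `y` odd. -/
def Oop (m : ℕ) (f : ℂ → ℂ) (τ : ℂ) : ℂ :=
  ∑ x ∈ m.divisorsAntidiagonal.filter (fun x => Even x.1 ∧ Even x.2),
    ∑ y ∈ (Finset.range x.2).filter (fun y => Odd y),
      f (((x.1 : ℂ) * τ + (y : ℂ)) / (x.2 : ℂ))

def Eop (m : ℕ) (f : ℂ → ℂ) (τ : ℂ) : ℂ :=
  ∑ x ∈ m.divisorsAntidiagonal.filter (fun x => Even x.1 ∧ Even x.2),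
    ∑ y ∈ (Finset.range x.2).filter (fun y => Even y),
      f (((x.1 : ℂ) * τ + (y : ℂ)) / (x.2 : ℂ))

theorem Finset.sum_filter_even_range_two_mul {M : Type*} [AddCommMonoid M] (c : ℕ) (g : ℕ → M) :
    ∑ y ∈ (Finset.range (2 * c)).filter Even, g y = ∑ y ∈ Finset.range c, g (2 * y) := by
  symm
  refine Finset.sum_bij (fun y _ => 2 * y) ?_ ?_ ?_ (fun _ _ => rfl)
  · intro y hy
    simp only [Finset.mem_filter, Finset.mem_range] at hy ⊢
    exact ⟨by omega, even_two_mul y⟩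
  · intro y _ y' _ h
    omega
  · intro y hy
    simp only [Finset.mem_filter, Finset.mem_range] at hy
    obtain ⟨hy, k, rfl⟩ := hy
    exact ⟨k, by simp only [Finset.mem_range]; omega, by ring⟩

theorem Oop_add_Eop (n : ℕ) (f : ℂ → ℂ) (τ : ℂ) :
    Oop n f τ + Eop n f τ =
      ∑ x ∈ n.divisorsAntidiagonal.filter (fun x => Even x.1 ∧ Even x.2),
        ∑ y ∈ Finset.range x.2, f (((x.1 : ℂ) * τ + (y : ℂ)) / (x.2 : ℂ)) := by
  rw [Oop, Eop, ← Finset.sum_add_distrib]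
  refine Finset.sum_congr rfl fun x _ => ?_
  simp only [← Nat.not_odd_iff_even]
  exact Finset.sum_filter_add_sum_filter_not _ _ _

theorem Rop_eq_Uop_add_Dop_add_Oop_add_Eop {n : ℕ} (hn : Even n) (f : ℂ → ℂ) (τ : ℂ) :
    Rop n f τ = Uop n f τ + Dop n f τ + Oop n f τ + Eop n f τ := by
  have hD : (n.divisorsAntidiagonal.filter (fun x => ¬ Odd x.2)).filter (fun x => Odd x.1) =
      n.divisorsAntidiagonal.filter (fun x => Odd x.1) := by
    rw [Finset.filter_filter]
    refine Finset.filter_congr fun x hx => and_iff_right_of_imp fun hx1 hx2 => ?_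
    rw [← (Nat.mem_divisorsAntidiagonal.mp hx).1] at hn
    exact Nat.not_even_iff_odd.mpr (hx1.mul hx2) hn
  have hE : (n.divisorsAntidiagonal.filter (fun x => ¬ Odd x.2)).filter (fun x => ¬ Odd x.1) =
      n.divisorsAntidiagonal.filter (fun x => Even x.1 ∧ Even x.2) := by
    rw [Finset.filter_filter]
    simp only [Nat.not_odd_iff_even, and_comm]
  rw [add_assoc _ (Oop n f τ), Oop_add_Eop, Dop, ← hD, ← hE, add_assoc,
    Finset.sum_filter_add_sum_filter_not,
    Rop, Uop, Finset.sum_filter_add_sum_filter_not]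

theorem Eop_four_mul (m : ℕ) (f : ℂ → ℂ) (τ : ℂ) : Eop (4 * m) f τ = Rop m f τ := by
  symm
  refine Finset.sum_bij (fun p _ => (2 * p.1, 2 * p.2)) ?_ ?_ ?_ ?_
  · rintro ⟨a, c⟩ h
    simp only [Finset.mem_filter, Nat.mem_divisorsAntidiagonal] at h ⊢
    refine ⟨⟨by rw [← h.1]; ring, by omega⟩, even_two_mul a, even_two_mul c⟩
  · rintro ⟨a, c⟩ _ ⟨a', c'⟩ _ h
    simp only [Prod.mk.injEq] at h ⊢
    omega
  · rintro ⟨_, _⟩ h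
    simp only [Finset.mem_filter, Nat.mem_divisorsAntidiagonal] at h
    obtain ⟨⟨hac, hm⟩, ⟨a, rfl⟩, ⟨c, rfl⟩⟩ := h
    refine ⟨(a, c), ?_, by simp only [Prod.mk.injEq]; omega⟩
    simp only [Nat.mem_divisorsAntidiagonal]
    have hprod : (a + a) * (c + c) = 4 * (a * c) := by ring
    constructor <;> omega
  · rintro ⟨a, c⟩ _
    rw [Finset.sum_filter_even_range_two_mul]
    refine Finset.sum_congr rfl fun y _ => congrArg f ?_
    push_cast
    rw [← mul_div_mul_left _ _ (two_ne_zero' ℂ)]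
    ring_nf

theorem filter_even_even_divisorsAntidiagonal_eq_empty {n : ℕ} (hn : ¬ 4 ∣ n) :
    n.divisorsAntidiagonal.filter (fun x => Even x.1 ∧ Even x.2) = ∅ := by
  refine Finset.filter_false_of_mem fun ⟨x, z⟩ h ⟨⟨a, hx⟩, ⟨c, hz⟩⟩ => hn ⟨a * c, ?_⟩
  rw [← (Nat.mem_divisorsAntidiagonal.mp h).1, hx, hz]
  ring

theorem Oop_eq_general (m : ℕ) (f : ℂ → ℂ) (τ : ℂ) :
    Oop (4 * m) f τ = Rop (4 * m) f τ - Rop m f τ - Uop (4 * m) f τ - Dop (4 * m) f τ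
    ∧ (Odd m → Rop (2 * m) f τ = Uop (2 * m) f τ + Dop (2 * m) f τ) := by
  refine ⟨?_, fun hm => ?_⟩
  · rw [Rop_eq_Uop_add_Dop_add_Oop_add_Eop ⟨2 * m, by ring⟩, Eop_four_mul]
    ring
  · have hn : ¬ 4 ∣ 2 * m := by
      obtain ⟨k, rfl⟩ := hm
      omega
    rw [Rop_eq_Uop_add_Dop_add_Oop_add_Eop (even_two_mul m), Oop, Eop,
      filter_even_even_divisorsAntidiagonal_eq_empty hn]
    simp

/-- For any `m ≥ 1`: `O_{4m} = R_{4m} − R_m − U_{4m} − D_{4m}`, and, if `m` is odd,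
`R_{2m} = U_{2m} + D_{2m}` (equivalently `O_{2m} = 0 = R_{2m} − U_{2m} − D_{2m}`). -/
theorem Oop_eq (m : ℕ) (hm : 0 < m) (f : ℂ → ℂ) (τ : ℂ) :
    Oop (4 * m) f τ = Rop (4 * m) f τ - Rop m f τ - Uop (4 * m) f τ - Dop (4 * m) f τ
    ∧ (Odd m → Rop (2 * m) f τ = Uop (2 * m) f τ + Dop (2 * m) f τ) :=
  Oop_eq_general m f τ
end
end
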